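/- arXiv:1804.00748 — 3 statements merged into one kernel-verified Lean document; each statement's English description precedes it below -/
import Mathlib

section
/- Let d ∈ {2,3} and let G be a subgroup of the isometry group of Euclidean space ℝᵈ such that every element of G fixes at least one point of ℝᵈ. Then G has a global fixed point: there exists x ∈ ℝᵈ with g·x = x for all g ∈ G. -/
open Pointwise Filter

/-- The joint displacement of a set of isometries at a point:
`L(S,x) = max_{s ∈ S} d(x, s x)`. -/
noncomputable def jointDispAt {X : Type*} [MetricSpace X] (S : Set (X ≃ᵢ X)) (x : X) : ℝ :=
  sSup ((fun s : X ≃ᵢ X => dist x (s x)) '' S)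

/-- The joint minimal displacement `L(S) = inf_x L(S,x)`. -/
noncomputable def jointMinDisp {X : Type*} [MetricSpace X] (S : Set (X ≃ᵢ X)) : ℝ :=
  sInf (Set.range (jointDispAt S))

/-- The asymptotic joint displacement `ℓ(S) = lim_n L(S^n)/n`; the limit exists by
subadditivity, hence agrees with the `limsup` used here. -/
noncomputable def asympDisp {X : Type*} [MetricSpace X] (S : Set (X ≃ᵢ X)) : ℝ :=
  Filter.limsup (fun n : ℕ => jointMinDisp (S ^ n) / n) Filter.atTop

/-- `λ(S) = max_{s ∈ S} ℓ(s)`. -/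
noncomputable def lamD {X : Type*} [MetricSpace X] (S : Set (X ≃ᵢ X)) : ℝ :=
  sSup ((fun s : X ≃ᵢ X => asympDisp {s}) '' S)

/-- `λ_k(S) = max_{1 ≤ j ≤ k} λ(S^j)/j`. -/
noncomputable def lamK {X : Type*} [MetricSpace X] (k : ℕ) (S : Set (X ≃ᵢ X)) : ℝ :=
  sSup ((fun j : ℕ => lamD (S ^ j) / j) '' Set.Icc 1 k)

/-- `λ_∞(S) = sup_{j ≥ 1} λ(S^j)/j`. -/
noncomputable def lamInf {X : Type*} [MetricSpace X] (S : Set (X ≃ᵢ X)) : ℝ :=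
  sSup ((fun j : ℕ => lamD (S ^ j) / j) '' Set.Ici 1)

/-- A geodesic segment from `a` to `b`: an isometric image of the interval `[0, d(a,b)]`. -/
def IsGeodesicSegment {X : Type*} [MetricSpace X] (s : Set X) (a b : X) : Prop :=
  ∃ f : ℝ → X, f 0 = a ∧ f (dist a b) = b ∧
    (∀ u ∈ Set.Icc (0 : ℝ) (dist a b), ∀ v ∈ Set.Icc (0 : ℝ) (dist a b),
      dist (f u) (f v) = |u - v|) ∧
    s = f '' Set.Icc (0 : ℝ) (dist a b)

/-- A geodesic metric space: every two points are joined by a geodesic segment. -/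
def GeodesicSpace (X : Type*) [MetricSpace X] : Prop :=
  ∀ a b : X, ∃ s : Set X, IsGeodesicSegment s a b

/-- `δ`-hyperbolicity: every geodesic triangle is `δ`-thin, i.e. each side is contained in
the closed `δ`-neighborhood of the union of the other two sides. -/
def GromovHyperbolic (X : Type*) [MetricSpace X] (δ : ℝ) : Prop :=
  ∀ a b c : X, ∀ sab sbc sca : Set X,
    IsGeodesicSegment sab a b → IsGeodesicSegment sbc b c → IsGeodesicSegment sca c a →
      (∀ x ∈ sab, ∃ y ∈ sbc ∪ sca, dist x y ≤ δ) ∧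
      (∀ x ∈ sbc, ∃ y ∈ sab ∪ sca, dist x y ≤ δ) ∧
      (∀ x ∈ sca, ∃ y ∈ sab ∪ sbc, dist x y ≤ δ)

/-- The CAT(0) comparison inequality: for all `a b c` and every midpoint `m` of a geodesic
from `b` to `c`, `2 d(a,m)² ≤ d(a,b)² + d(a,c)² - d(b,c)²/2`. -/
def CAT0 (X : Type*) [MetricSpace X] : Prop :=
  ∀ a b c m : X, dist b m = dist b c / 2 → dist m c = dist b c / 2 →
    2 * dist a m ^ 2 ≤ dist a b ^ 2 + dist a c ^ 2 - dist b c ^ 2 / 2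

/-- A subset is (geodesically) convex if every geodesic segment between two of its points is
contained in it. -/
def GeodConvex {X : Type*} [MetricSpace X] (C : Set X) : Prop :=
  ∀ a ∈ C, ∀ b ∈ C, ∀ s : Set X, IsGeodesicSegment s a b → s ⊆ C

/-- Translation length `L(g) = inf_x d(x, g x)`. -/
noncomputable def transLen {X : Type*} [MetricSpace X] (g : X ≃ᵢ X) : ℝ :=
  sInf (Set.range fun x : X => dist x (g x))

/-- Asymptotic translation length `ℓ(g) = lim_n L(g^n)/n`. -/
noncomputable def asympTransLen {X : Type*} [MetricSpace X] (g : X ≃ᵢ X) : ℝ :=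
  Filter.limsup (fun n : ℕ => transLen (g ^ n) / n) Filter.atTop

/-!
An isometry with a fixed point and trivial linear part is the identity, so commutators of
elements of `G` with commuting linear parts are trivial. Hence the orientation-preserving part
of `G` has a common fixed point: in the plane its elements are rotations, which commute, so
they fix the centre of any nontrivial one. In space, rotations whose axes have a common
direction commute and fix a common axis. Two rotations with different axis directions fix a
common point `w`, because their product has a fixed point and so their axes meet or are
coplanar; a rotation not fixing `w` would force the axes of both and of their product into one
plane, which is impossible.

The fixed set of the orientation-preserving part is then a nonempty closed convex set preserved
by `G`; the point of it nearest to a fixed point of an orientation-reversing `g₀ ∈ G` is fixed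
by `g₀`, hence by all of `G`.
-/

open Module Submodule AffineSubspace
open scoped RealInnerProductSpace

theorem Submodule.finrank_span_pair_le_two {𝕜 V : Type*} [Field 𝕜] [AddCommGroup V]
    [Module 𝕜 V] (u v : V) : finrank 𝕜 (span 𝕜 {u, v}) ≤ 2 := by
  classical
  have := finrank_span_finset_le_card (R := 𝕜) ({u, v} : Finset V)
  rw [Finset.coe_insert, Finset.coe_singleton] at this
  exact this.trans Finset.card_le_two

theorem Submodule.eq_span_pair_of_finrank_le_two {𝕜 V : Type*} [Field 𝕜] [AddCommGroup V]
    [Module 𝕜 V] [FiniteDimensional 𝕜 V] {K : Submodule 𝕜 V} (hK : finrank 𝕜 K ≤ 2) {u y : V}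
    (hu : u ≠ 0) (huK : u ∈ K) (hyK : y ∈ K) (hyu : y ∉ 𝕜 ∙ u) : K = span 𝕜 {u, y} := by
  have hle : span 𝕜 {u, y} ≤ K := span_le.mpr (Set.insert_subset huK (by simpa using hyK))
  have hlt : 𝕜 ∙ u < span 𝕜 {u, y} :=
    lt_of_le_of_ne (span_mono (by simp)) fun h => hyu (h ▸ subset_span (by simp))
  have := finrank_lt_finrank_of_lt hlt
  rw [finrank_span_singleton hu] at this
  exact (eq_of_le_of_finrank_le hle (by omega)).symm

section LinearIsometries

variable {E : Type*} [NormedAddCommGroup E] [InnerProductSpace ℝ E]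

theorem fact_finrank_orthogonal_span_singleton (hE : finrank ℝ E = 3) {u : E} (hu : u ≠ 0) :
    Fact (finrank ℝ (ℝ ∙ u)ᗮ = 2) :=
  have : Fact (finrank ℝ E = 2 + 1) := ⟨hE⟩
  ⟨finrank_orthogonal_span_singleton hu⟩

theorem finrank_direction_perpBisector (hE : finrank ℝ E = 3) {x y : E} (h : x ≠ y) :
    finrank ℝ (perpBisector x y).direction = 2 := by
  rw [direction_perpBisector, vsub_eq_sub]
  exact (fact_finrank_orthogonal_span_singleton hE (sub_ne_zero.mpr h.symm)).out

theorem LinearMap.det_adjoint [FiniteDimensional ℝ E] (f : E →ₗ[ℝ] E) :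
    (LinearMap.adjoint f).det = f.det := by
  let b := stdOrthonormalBasis ℝ E
  rw [← LinearMap.det_toMatrix b.toBasis, ← LinearMap.det_toMatrix b.toBasis,
    LinearMap.toMatrix_adjoint, Matrix.det_conjTranspose, star_trivial]

namespace LinearIsometryEquiv

theorem det_symm_mul_det (A : E ≃ₗᵢ[ℝ] E) :
    LinearMap.det A.symm.toLinearMap * LinearMap.det A.toLinearMap = 1 := by
  rw [← LinearMap.det_comp]
  simp

theorem det_eq_one_or_eq_neg_one [FiniteDimensional ℝ E] (A : E ≃ₗᵢ[ℝ] E) :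
    LinearMap.det A.toLinearMap = 1 ∨ LinearMap.det A.toLinearMap = -1 := by
  refine mul_self_eq_one_iff.mp ?_
  rw [← A.det_symm_mul_det, ← A.adjoint_toLinearMap_eq_symm, LinearMap.det_adjoint]

/-- Since `A⁻¹` is the adjoint of `A`, in odd dimension
`det (A - 1) = det (A⁻¹ - 1) = -det A⁻¹ * det (A - 1)`. -/
theorem exists_apply_eq_self_of_det_eq_one [FiniteDimensional ℝ E] (hE : Odd (finrank ℝ E))
    {A : E ≃ₗᵢ[ℝ] E} (hA : LinearMap.det A.toLinearMap = 1) : ∃ v ≠ 0, A v = v := by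
  set f := A.toLinearMap - LinearMap.id
  have hadj : LinearMap.adjoint f = (-1 : ℝ) • (A.symm.toLinearMap ∘ₗ f) := by
    ext x
    simp [f, adjoint_toLinearMap_eq_symm]
  have hsymm : LinearMap.det A.symm.toLinearMap = 1 := by
    simpa [hA] using A.det_symm_mul_det
  have hf : f.det = 0 := by
    have := LinearMap.det_adjoint f
    rw [hadj, LinearMap.det_smul, LinearMap.det_comp, hsymm, hE.neg_one_pow] at this
    linarith
  obtain ⟨v, hv, hv0⟩ := exists_mem_ne_zero_of_ne_bot (LinearMap.bot_lt_ker_of_det_eq_zero hf).ne'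
  exact ⟨v, hv0, sub_eq_zero.mp (by simpa [f] using hv)⟩

theorem inner_apply_of_apply_eq_self (A : E ≃ₗᵢ[ℝ] E) {u : E} (hu : A u = u) (x : E) :
    ⟪u, A x⟫ = ⟪u, x⟫ := by
  conv_lhs => rw [← hu]
  exact A.inner_map_map u x

/-- `x - B x` is orthogonal to `u₁` and `u₂`, hence to `x`; as `‖B x‖ = ‖x‖`, it vanishes. -/
theorem apply_eq_self_of_mem_span_pair {A B : E ≃ₗᵢ[ℝ] E} {u₁ u₂ x : E} (hA : A u₁ = u₁)
    (hB : B u₂ = u₂) (hx : A (B x) = x) (hmem : x ∈ span ℝ {u₁, u₂}) : B x = x := by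
  have h₁ : ⟪u₁, x⟫ = ⟪u₁, B x⟫ := by
    conv_lhs => rw [← hx]
    exact A.inner_apply_of_apply_eq_self hA _
  have h₂ := B.inner_apply_of_apply_eq_self hB x
  obtain ⟨a, b, hab⟩ := mem_span_pair.mp hmem
  have hperp : ⟪a • u₁ + b • u₂, x - B x⟫ = 0 := by
    simp [inner_add_left, real_inner_smul_left, inner_sub_right, h₁, h₂]
  rw [hab] at hperp
  have hnorm : ⟪x - B x, x - B x⟫ = 2 * ⟪x, x - B x⟫ := by
    simp only [inner_sub_left, inner_sub_right, B.inner_map_map, real_inner_comm (B x) x]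
    ring
  rw [hperp, mul_zero] at hnorm
  exact (sub_eq_zero.mp (inner_self_eq_zero.mp hnorm)).symm

section Plane

variable {V : Type*} [NormedAddCommGroup V] [InnerProductSpace ℝ V] [Fact (finrank ℝ V = 2)]

theorem commute_of_det_eq_one {A B : V ≃ₗᵢ[ℝ] V} (hA : LinearMap.det A.toLinearMap = 1)
    (hB : LinearMap.det B.toLinearMap = 1) : Commute A B := by
  have := FiniteDimensional.of_fact_finrank_eq_two (K := ℝ) (V := V)
  let o : Orientation ℝ V (Fin 2) := (finBasisOfFinrankEq ℝ V Fact.out).orientation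
  obtain ⟨θ, rfl⟩ := o.exists_linearIsometryEquiv_eq_of_det_pos (f := A) (by simp [hA])
  obtain ⟨φ, rfl⟩ := o.exists_linearIsometryEquiv_eq_of_det_pos (f := B) (by simp [hB])
  simp only [Commute, SemiconjBy, mul_def, o.rotation_trans, add_comm]

theorem eq_one_of_det_eq_one_of_apply_eq_self {A : V ≃ₗᵢ[ℝ] V}
    (hA : LinearMap.det A.toLinearMap = 1) {v : V} (hv : v ≠ 0) (hAv : A v = v) : A = 1 := by
  have := FiniteDimensional.of_fact_finrank_eq_two (K := ℝ) (V := V)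
  let o : Orientation ℝ V (Fin 2) := (finBasisOfFinrankEq ℝ V Fact.out).orientation
  obtain ⟨θ, rfl⟩ := o.exists_linearIsometryEquiv_eq_of_det_pos (f := A) (by simp [hA])
  obtain rfl : θ = 0 := ((o.rotation_eq_self_iff v θ).mp hAv).resolve_left hv
  exact o.rotation_zero

end Plane

theorem apply_mem_orthogonal_span_singleton (A : E ≃ₗᵢ[ℝ] E) {u : E} (hu : A u = u) {x : E}
    (hx : x ∈ (ℝ ∙ u)ᗮ) : A x ∈ (ℝ ∙ u)ᗮ := by
  rw [mem_orthogonal_singleton_iff_inner_right] at hx ⊢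
  rw [A.inner_apply_of_apply_eq_self hu, hx]

theorem ext_of_apply_eq_self {A B : E ≃ₗᵢ[ℝ] E} {u : E} (hA : A u = u) (hB : B u = u)
    (h : ∀ x ∈ (ℝ ∙ u)ᗮ, A x = B x) : A = B := by
  ext x
  obtain ⟨y, hy, z, hz, rfl⟩ := (ℝ ∙ u).exists_add_mem_mem_orthogonal x
  obtain ⟨c, rfl⟩ := mem_span_singleton.mp hy
  simp [hA, hB, h z hz]

variable [FiniteDimensional ℝ E]

noncomputable def restrictOrthogonal (A : E ≃ₗᵢ[ℝ] E) {u : E} (hu : A u = u) :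
    (ℝ ∙ u)ᗮ ≃ₗᵢ[ℝ] (ℝ ∙ u)ᗮ :=
  LinearIsometry.toLinearIsometryEquiv
    { toLinearMap := A.toLinearMap.restrict fun _ => A.apply_mem_orthogonal_span_singleton hu
      norm_map' := fun x => A.norm_map x } rfl

@[simp]
theorem coe_restrictOrthogonal_apply (A : E ≃ₗᵢ[ℝ] E) {u : E} (hu : A u = u)
    (x : (ℝ ∙ u)ᗮ) : (A.restrictOrthogonal hu x : E) = A x :=
  rfl

/-- `A` induces the identity on `E ⧸ (ℝ ∙ u)ᗮ`. -/
theorem det_restrictOrthogonal (A : E ≃ₗᵢ[ℝ] E) {u : E} (hu : A u = u) :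
    LinearMap.det (A.restrictOrthogonal hu).toLinearMap = LinearMap.det A.toLinearMap := by
  have hW : (ℝ ∙ u)ᗮ ≤ (ℝ ∙ u)ᗮ.comap A.toLinearMap := fun _ =>
    A.apply_mem_orthogonal_span_singleton hu
  have hQ : (ℝ ∙ u)ᗮ.mapQ (ℝ ∙ u)ᗮ A.toLinearMap hW = LinearMap.id := by
    refine linearMap_qext _ (LinearMap.ext fun x => (Submodule.Quotient.eq _).mpr ?_)
    rw [mem_orthogonal_singleton_iff_inner_right]
    simp [inner_sub_right, A.inner_apply_of_apply_eq_self hu]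
  rw [LinearMap.det_eq_det_mul_det _ _ hW, hQ, LinearMap.det_id, mul_one]
  rfl

section ThreeSpace

variable (hE : finrank ℝ E = 3)
include hE

theorem commute_of_apply_eq_self {A B : E ≃ₗᵢ[ℝ] E} (hA : LinearMap.det A.toLinearMap = 1)
    (hB : LinearMap.det B.toLinearMap = 1) {u : E} (hu : u ≠ 0) (hAu : A u = u)
    (hBu : B u = u) : Commute A B := by
  have := fact_finrank_orthogonal_span_singleton hE hu
  have hcomm := (commute_of_det_eq_one (A := A.restrictOrthogonal hAu)
    (B := B.restrictOrthogonal hBu) (by rwa [det_restrictOrthogonal])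
    (by rwa [det_restrictOrthogonal])).eq
  refine ext_of_apply_eq_self (u := u) (by simp [hAu, hBu]) (by simp [hAu, hBu]) fun x hx => ?_
  simpa using congrArg (fun C => (C ⟨x, hx⟩ : E)) hcomm

theorem mem_span_singleton_of_apply_eq_self {A : E ≃ₗᵢ[ℝ] E}
    (hA : LinearMap.det A.toLinearMap = 1) (hA1 : A ≠ 1) {u : E} (hu : u ≠ 0) (hAu : A u = u)
    {z : E} (hz : A z = z) : z ∈ ℝ ∙ u := by
  have := fact_finrank_orthogonal_span_singleton hE hu
  obtain ⟨y, hy, w, hw, rfl⟩ := (ℝ ∙ u).exists_add_mem_mem_orthogonal z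
  obtain ⟨c, rfl⟩ := mem_span_singleton.mp hy
  have hAw : A w = w := by simpa [hAu] using hz
  by_cases hw0 : w = 0
  · simpa [hw0] using hy
  refine absurd (ext_of_apply_eq_self (B := 1) hAu rfl fun x hx => ?_) hA1
  have h1 := eq_one_of_det_eq_one_of_apply_eq_self (A := A.restrictOrthogonal hAu)
    (by rwa [det_restrictOrthogonal]) (v := ⟨w, hw⟩) (by simpa using hw0) (Subtype.ext hAw)
  simpa using congrArg (fun C => (C ⟨x, hx⟩ : E)) h1

end ThreeSpace

end LinearIsometryEquiv

end LinearIsometries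

section Isometries

variable {E : Type*} [NormedAddCommGroup E] [InnerProductSpace ℝ E]

namespace IsometryEquiv

noncomputable def linearPart : (E ≃ᵢ E) →* (E ≃ₗᵢ[ℝ] E) where
  toFun g := g.toRealLinearIsometryEquiv
  map_one' := by ext x; simp
  map_mul' g h := by
    ext x
    simp only [toRealLinearIsometryEquiv_apply, mul_apply, LinearIsometryEquiv.coe_mul,
      Function.comp_apply, map_sub]
    abel

theorem linearPart_apply (g : E ≃ᵢ E) (x : E) : g.linearPart x = g x - g 0 :=
  g.toRealLinearIsometryEquiv_apply x

theorem linearPart_sub {g : E ≃ᵢ E} (x y : E) : g.linearPart (x - y) = g x - g y := by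
  rw [map_sub, linearPart_apply, linearPart_apply, sub_sub_sub_cancel_right]

theorem apply_eq_linearPart_sub_add (g : E ≃ᵢ E) (x p : E) :
    g x = g.linearPart (x - p) + g p := by
  rw [linearPart_sub, sub_add_cancel]

theorem apply_add_of_linearPart {g : E ≃ᵢ E} {x v : E} (hx : g x = x)
    (hv : g.linearPart v = v) : g (x + v) = x + v := by
  rw [apply_eq_linearPart_sub_add g (x + v) x, add_sub_cancel_left, hv, hx, add_comm]

theorem convex_setOf_apply_eq_self (g : E ≃ᵢ E) : Convex ℝ {x | g x = x} := by
  intro x hx y hy a b _ _ hab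
  change g x = x at hx
  change g y = y at hy
  change g _ = _
  rw [apply_eq_linearPart_sub_add g _ 0, sub_zero, map_add, map_smul, map_smul, linearPart_apply,
    linearPart_apply, hx, hy]
  match_scalars <;> linarith

theorem inner_apply_sub_self_eq_zero {g : E ≃ᵢ E} (hg : ∃ p, g p = p) {v : E}
    (hv : g.linearPart v = v) (x : E) : ⟪g x - x, v⟫ = 0 := by
  obtain ⟨p, hp⟩ := hg
  have hinner : ⟪g.linearPart (x - p), v⟫ = ⟪x - p, v⟫ := by
    conv_lhs => rw [← hv]
    exact g.linearPart.inner_map_map _ _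
  rw [apply_eq_linearPart_sub_add g x p, hp, ← sub_sub_eq_add_sub, inner_sub_left, hinner,
    sub_self]

theorem eq_one_of_linearPart_eq_one {g : E ≃ᵢ E} (hg : ∃ p, g p = p) (h : g.linearPart = 1) :
    g = 1 := by
  obtain ⟨p, hp⟩ := hg
  ext x
  simp [apply_eq_linearPart_sub_add g x p, h, hp]

/-- The commutator of `g` and `h` is a translation with a fixed point. -/
theorem commute_of_commute_linearPart {G : Subgroup (E ≃ᵢ E)} (hfix : ∀ g ∈ G, ∃ x, g x = x)
    {g h : E ≃ᵢ E} (hg : g ∈ G) (hh : h ∈ G) (hc : Commute g.linearPart h.linearPart) :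
    Commute g h := by
  have hmem : g * h * g⁻¹ * h⁻¹ ∈ G :=
    G.mul_mem (G.mul_mem (G.mul_mem hg hh) (G.inv_mem hg)) (G.inv_mem hh)
  have hlin : (g * h * g⁻¹ * h⁻¹).linearPart = 1 := by
    simp only [map_mul, map_inv, hc.eq, mul_inv_cancel_right, mul_inv_cancel]
  have h1 := eq_one_of_linearPart_eq_one (hfix _ hmem) hlin
  rw [mul_inv_eq_one, mul_inv_eq_iff_eq_mul] at h1
  exact h1

theorem apply_eq_self_of_commute {g h : E ≃ᵢ E} (hh : ∃ p, h p = p) (hc : Commute g h)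
    (hV : ∀ v, g.linearPart v = v → h.linearPart v = v) {x : E} (hx : g x = x) : h x = x := by
  have hghx : g (h x) = h x := by
    have := congrArg (· x) hc.eq
    simpa [hx] using this
  have hv := hV (h x - x) (by rw [linearPart_sub, hghx, hx])
  exact sub_eq_zero.mp (inner_self_eq_zero.mp (inner_apply_sub_self_eq_zero hh hv x))

theorem exists_fixed_or_mem_perpBisector {g h : E ≃ᵢ E} {x : E} (hx : g (h x) = x) :
    (∃ z, g z = z ∧ h z = z) ∨
      h x ≠ x ∧ ∀ z, (g z = z ∨ h z = z) → z ∈ perpBisector x (h x) := by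
  by_cases hhx : h x = x
  · exact Or.inl ⟨x, by rwa [hhx] at hx, hhx⟩
  refine Or.inr ⟨hhx, fun z hz => mem_perpBisector_iff_dist_eq.mpr ?_⟩
  rcases hz with hz | hz
  · rw [← g.dist_eq z (h x), hz, hx]
  · rw [← h.dist_eq, hz]

theorem linearPart_fixed_mem_direction {g : E ≃ᵢ E} {S : AffineSubspace ℝ E}
    (hS : ∀ z, g z = z → z ∈ S) {p : E} (hp : g p = p) {v : E} (hv : g.linearPart v = v) :
    v ∈ S.direction := by
  simpa using vsub_mem_direction (hS _ (apply_add_of_linearPart hp hv)) (hS p hp)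

/-- The point of `K` nearest to `p` is fixed, by uniqueness of nearest points. -/
theorem exists_mem_apply_eq_self_of_mapsTo {K : Set E} (hne : K.Nonempty)
    (hK : IsComplete K) (hconv : Convex ℝ K) {f : E ≃ᵢ E} (hf : Set.MapsTo f K K) {p : E}
    (hp : f p = p) : ∃ q ∈ K, f q = q := by
  obtain ⟨q, hqK, hq⟩ := exists_norm_eq_iInf_of_complete_convex hne hK hconv p
  have hfq : ‖p - f q‖ = ⨅ z : K, ‖p - z‖ := by
    rw [← hq, ← dist_eq_norm, ← dist_eq_norm]
    conv_lhs => rw [← hp]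
    exact f.dist_eq p q
  have h₁ := (norm_eq_iInf_iff_real_inner_le_zero hconv hqK).mp hq (f q) (hf hqK)
  have h₂ := (norm_eq_iInf_iff_real_inner_le_zero hconv (hf hqK)).mp hfq q hqK
  have hsum : ⟪f q - q, f q - q⟫ = ⟪p - q, f q - q⟫ + ⟪p - f q, q - f q⟫ := by
    rw [← neg_sub (f q) q, inner_neg_right, ← sub_eq_add_neg, ← inner_sub_left,
      sub_sub_sub_cancel_left]
  refine ⟨q, hqK, sub_eq_zero.mp (inner_self_eq_zero.mp (le_antisymm ?_ real_inner_self_nonneg))⟩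
  linarith

theorem exists_forall_apply_eq_self_of_index_two [CompleteSpace E] {G H : Subgroup (E ≃ᵢ E)}
    [H.Normal] (hH : ∀ g g', g ∉ H → g' ∉ H → g * g' ∈ H) (hfix : ∀ g ∈ G, ∃ x, g x = x)
    (hGH : ∃ x, ∀ h ∈ G ⊓ H, h x = x) : ∃ x, ∀ g ∈ G, g x = x := by
  by_cases hGle : G ≤ H
  · obtain ⟨x, hx⟩ := hGH
    exact ⟨x, fun g hg => hx g ⟨hg, hGle hg⟩⟩
  obtain ⟨g₀, hg₀G, hg₀H⟩ := Set.not_subset.mp hGle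
  set Φ := {x | ∀ h ∈ G ⊓ H, h x = x}
  have hconv : Convex ℝ Φ := fun x hx y hy a b ha hb hab h hh =>
    h.convex_setOf_apply_eq_self (hx h hh) (hy h hh) ha hb hab
  have hclosed : IsClosed Φ := by
    simp only [Φ, Set.ofPred_forall]
    exact isClosed_iInter fun h => isClosed_iInter fun _ => isClosed_eq h.continuous continuous_id
  have hmaps : Set.MapsTo g₀ Φ Φ := by
    intro y hy h hh
    have hconj : g₀⁻¹ * h * g₀ ∈ G ⊓ H :=
      ⟨G.mul_mem (G.mul_mem (G.inv_mem hg₀G) hh.1) hg₀G, ‹H.Normal›.conj_mem' _ hh.2 g₀⟩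
    simpa using congrArg g₀ (hy _ hconj)
  obtain ⟨p, hp⟩ := hfix g₀ hg₀G
  obtain ⟨q, hqΦ, hq⟩ :=
    exists_mem_apply_eq_self_of_mapsTo hGH hclosed.isComplete hconv hmaps hp
  refine ⟨q, fun g hg => ?_⟩
  by_cases hgH : g ∈ H
  · exact hqΦ g ⟨hg, hgH⟩
  have hmem : g₀⁻¹ * g ∈ G ⊓ H :=
    ⟨G.mul_mem (G.inv_mem hg₀G) hg, hH _ _ (by rwa [H.inv_mem_iff]) hgH⟩
  calc g q = g₀ ((g₀⁻¹ * g) q) := by simp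
    _ = q := by rw [hqΦ _ hmem, hq]

noncomputable def linearPartDet : (E ≃ᵢ E) →* ℝ where
  toFun g := LinearMap.det g.linearPart.toLinearMap
  map_one' := by rw [map_one]; exact LinearMap.det_id
  map_mul' g h := by rw [map_mul]; exact LinearMap.det_comp _ _

noncomputable def orientationPreserving : Subgroup (E ≃ᵢ E) :=
  linearPartDet.ker

instance : (orientationPreserving : Subgroup (E ≃ᵢ E)).Normal :=
  MonoidHom.normal_ker _

theorem mem_orientationPreserving {g : E ≃ᵢ E} :
    g ∈ orientationPreserving ↔ LinearMap.det g.linearPart.toLinearMap = 1 :=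
  Iff.rfl

theorem mul_mem_orientationPreserving [FiniteDimensional ℝ E] {g g' : E ≃ᵢ E}
    (hg : g ∉ orientationPreserving) (hg' : g' ∉ orientationPreserving) :
    g * g' ∈ orientationPreserving := by
  rw [mem_orientationPreserving] at hg hg'
  rw [orientationPreserving, MonoidHom.mem_ker, map_mul]
  change LinearMap.det g.linearPart.toLinearMap * LinearMap.det g'.linearPart.toLinearMap = 1
  rw [g.linearPart.det_eq_one_or_eq_neg_one.resolve_left hg,
    g'.linearPart.det_eq_one_or_eq_neg_one.resolve_left hg']
  norm_num

end IsometryEquiv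

end Isometries

namespace IsometryEquiv

variable {E : Type*} [NormedAddCommGroup E] [InnerProductSpace ℝ E]

theorem exists_forall_orientationPreserving_apply_eq_self_of_finrank_eq_two
    [Fact (finrank ℝ E = 2)] {G : Subgroup (E ≃ᵢ E)} (hfix : ∀ g ∈ G, ∃ x, g x = x) :
    ∃ x, ∀ g ∈ G ⊓ orientationPreserving, g x = x := by
  by_cases htriv : ∀ g ∈ G ⊓ orientationPreserving, g = 1
  · exact ⟨0, fun g hg => by simp [htriv g hg]⟩
  push Not at htriv
  obtain ⟨g₁, hg₁, hne₁⟩ := htriv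
  obtain ⟨x, hx⟩ := hfix g₁ hg₁.1
  refine ⟨x, fun h hh => apply_eq_self_of_commute (hfix h hh.1) ?_ (fun v hv => ?_) hx⟩
  · exact commute_of_commute_linearPart hfix hg₁.1 hh.1
      (LinearIsometryEquiv.commute_of_det_eq_one hg₁.2 hh.2)
  · obtain rfl : v = 0 := by
      by_contra hv0
      exact hne₁ (eq_one_of_linearPart_eq_one (hfix g₁ hg₁.1)
        (LinearIsometryEquiv.eq_one_of_det_eq_one_of_apply_eq_self hg₁.2 hv0 hv))
    exact map_zero _

section ThreeSpace

variable [FiniteDimensional ℝ E] (hE : finrank ℝ E = 3)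
include hE

theorem exists_linearPart_apply_eq_self {g : E ≃ᵢ E} (hg : g ∈ orientationPreserving) :
    ∃ u ≠ 0, g.linearPart u = u :=
  LinearIsometryEquiv.exists_apply_eq_self_of_det_eq_one (by rw [hE]; decide) hg

theorem linearPart_fixed_mem_span_singleton {g : E ≃ᵢ E} (hg : g ∈ orientationPreserving)
    (hfix : ∃ p, g p = p) (hg1 : g ≠ 1) {u v : E} (hu : u ≠ 0) (hgu : g.linearPart u = u)
    (hv : g.linearPart v = v) : v ∈ ℝ ∙ u :=
  LinearIsometryEquiv.mem_span_singleton_of_apply_eq_self hE hg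
    (fun h => hg1 (eq_one_of_linearPart_eq_one hfix h)) hu hgu hv

/-- In the second alternative of `exists_fixed_or_mem_perpBisector`, the fixed sets lie in a plane
with direction `span ℝ {u₁, u₂}`, so fixed points `p`, `q` satisfy `p - q = a • u₁ + b • u₂`. -/
theorem exists_common_fixed_point_of_not_mem_span_singleton {g₁ g₂ : E ≃ᵢ E} (h₁ : ∃ p, g₁ p = p)
    (h₂ : ∃ q, g₂ q = q) (h₁₂ : ∃ x, (g₁ * g₂) x = x) {u₁ u₂ : E} (hu₁ : u₁ ≠ 0)
    (hg₁u₁ : g₁.linearPart u₁ = u₁) (hg₂u₂ : g₂.linearPart u₂ = u₂) (hu₂ : u₂ ∉ ℝ ∙ u₁) :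
    ∃ w, g₁ w = w ∧ g₂ w = w := by
  obtain ⟨x, hx⟩ := h₁₂
  rcases exists_fixed_or_mem_perpBisector hx with hw | ⟨hne, hS⟩
  · exact hw
  obtain ⟨p, hp⟩ := h₁
  obtain ⟨q, hq⟩ := h₂
  have hdir := eq_span_pair_of_finrank_le_two (finrank_direction_perpBisector hE hne.symm).le hu₁
    (linearPart_fixed_mem_direction (fun z hz => hS z (.inl hz)) hp hg₁u₁)
    (linearPart_fixed_mem_direction (fun z hz => hS z (.inr hz)) hq hg₂u₂) hu₂
  have hpq := vsub_mem_direction (hS p (.inl hp)) (hS q (.inr hq))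
  rw [hdir, vsub_eq_sub] at hpq
  obtain ⟨a, b, hab⟩ := mem_span_pair.mp hpq
  refine ⟨p + (-a) • u₁, apply_add_of_linearPart hp (by rw [_root_.map_smul, hg₁u₁]), ?_⟩
  have hw : p + (-a) • u₁ = q + b • u₂ := by
    rw [← sub_add_cancel p q, ← hab]
    module
  rw [hw]
  exact apply_add_of_linearPart hq (by rw [_root_.map_smul, hg₂u₂])

/-- The axis of a rotation `m` fixing `w` lies in the plane through `w` and the axis `z + ℝ ∙ u`
of `k`. -/
theorem linearPart_fixed_mem_span_pair {G : Subgroup (E ≃ᵢ E)} (hfix : ∀ g ∈ G, ∃ x, g x = x)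
    {k m : E ≃ᵢ E} (hk : k ∈ G ⊓ orientationPreserving) (hm : m ∈ G ⊓ orientationPreserving)
    (hm1 : m ≠ 1) {w z u : E} (hkw : k w ≠ w) (hz : k z = z) (hu : u ≠ 0)
    (hku : k.linearPart u = u) (hmw : m w = w) {v : E} (hv : m.linearPart v = v) :
    v ∈ span ℝ {u, w - z} := by
  have hk1 : k ≠ 1 := by rintro rfl; exact hkw rfl
  have hwz : w - z ∉ ℝ ∙ u := by
    intro h
    obtain ⟨c, hc⟩ := mem_span_singleton.mp h
    refine hkw ?_
    rw [← sub_add_cancel w z, ← hc, add_comm]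
    exact apply_add_of_linearPart hz (by rw [_root_.map_smul, hku])
  obtain ⟨x, hx⟩ := hfix (m * k) (G.mul_mem hm.1 hk.1)
  rcases exists_fixed_or_mem_perpBisector hx with ⟨y, hym, hyk⟩ | ⟨hne, hS⟩
  · have hyw : y - w ≠ 0 := sub_ne_zero.mpr fun h => hkw (h ▸ hyk)
    have hv' := linearPart_fixed_mem_span_singleton hE hm.2 (hfix m hm.1) hm1 hyw
      (by rw [linearPart_sub, hym, hmw]) hv
    have hyz := linearPart_fixed_mem_span_singleton hE hk.2 (hfix k hk.1) hk1 hu hku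
      (v := y - z) (by rw [linearPart_sub, hyk, hz])
    refine span_singleton_le_iff_mem _ _ |>.mpr ?_ hv'
    rw [← sub_sub_sub_cancel_right y w z]
    exact sub_mem (span_mono (by simp) hyz) (subset_span (by simp))
  · rw [← eq_span_pair_of_finrank_le_two (finrank_direction_perpBisector hE hne.symm).le hu
      (linearPart_fixed_mem_direction (fun y hy => hS y (.inr hy)) hz hku)
      (show w - z ∈ _ from vsub_mem_direction (hS w (.inl hmw)) (hS z (.inr hz))) hwz]
    exact linearPart_fixed_mem_direction (fun y hy => hS y (.inl hy)) hmw hv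

/-- Otherwise `linearPart_fixed_mem_span_pair` puts the axes of `g₁`, `g₂` and `g₁ * g₂` in one
plane, which `apply_eq_self_of_mem_span_pair` forbids. -/
theorem apply_eq_self_of_common_fixed_vector_eq_zero {G : Subgroup (E ≃ᵢ E)}
    (hfix : ∀ g ∈ G, ∃ x, g x = x) {g₁ g₂ k : E ≃ᵢ E} (hg₁ : g₁ ∈ G ⊓ orientationPreserving)
    (hg₂ : g₂ ∈ G ⊓ orientationPreserving) (hk : k ∈ G ⊓ orientationPreserving)
    (hV : ∀ v, g₁.linearPart v = v → g₂.linearPart v = v → v = 0) {w : E} (hw₁ : g₁ w = w)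
    (hw₂ : g₂ w = w) : k w = w := by
  by_contra hkw
  obtain ⟨z, hz⟩ := hfix k hk.1
  obtain ⟨u, hu, hku⟩ := exists_linearPart_apply_eq_self hE hk.2
  obtain ⟨u₁, hu₁, hg₁u₁⟩ := exists_linearPart_apply_eq_self hE hg₁.2
  obtain ⟨u₂, hu₂, hg₂u₂⟩ := exists_linearPart_apply_eq_self hE hg₂.2
  have hg₁₂ := (G ⊓ orientationPreserving).mul_mem hg₁ hg₂
  obtain ⟨x, hx, hg₁₂x⟩ := exists_linearPart_apply_eq_self hE hg₁₂.2
  simp only [map_mul, LinearIsometryEquiv.coe_mul, Function.comp_apply] at hg₁₂x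
  have hne₁ : g₁ ≠ 1 := by rintro rfl; exact hu₂ (hV u₂ (by simp) hg₂u₂)
  have hne₂ : g₂ ≠ 1 := by rintro rfl; exact hu₁ (hV u₁ hg₁u₁ (by simp))
  have hne₁₂ : g₁ * g₂ ≠ 1 := by
    intro h
    have : g₁.linearPart u₂ = u₂ := by
      simpa [hg₂u₂] using congrArg (fun g : E ≃ᵢ E => g.linearPart u₂) h
    exact hu₂ (hV u₂ this hg₂u₂)
  have hu₁₂ : u₂ ∉ ℝ ∙ u₁ := by
    intro h
    obtain ⟨c, rfl⟩ := mem_span_singleton.mp h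
    exact hu₂ (hV _ (by rw [_root_.map_smul, hg₁u₁]) hg₂u₂)
  have hQ := eq_span_pair_of_finrank_le_two (finrank_span_pair_le_two u (w - z)) hu₁
    (linearPart_fixed_mem_span_pair hE hfix hk hg₁ hne₁ hkw hz hu hku hw₁ hg₁u₁)
    (linearPart_fixed_mem_span_pair hE hfix hk hg₂ hne₂ hkw hz hu hku hw₂ hg₂u₂) hu₁₂
  have hxmem := linearPart_fixed_mem_span_pair hE hfix hk hg₁₂ hne₁₂ hkw hz hu hku
    (by simp [hw₁, hw₂]) (v := x) (by simpa using hg₁₂x)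
  rw [hQ] at hxmem
  have h₂ := LinearIsometryEquiv.apply_eq_self_of_mem_span_pair hg₁u₁ hg₂u₂ hg₁₂x hxmem
  rw [h₂] at hg₁₂x
  exact hx (hV x hg₁₂x h₂)

theorem exists_forall_orientationPreserving_apply_eq_self_of_finrank_eq_three
    {G : Subgroup (E ≃ᵢ E)} (hfix : ∀ g ∈ G, ∃ x, g x = x) :
    ∃ x, ∀ g ∈ G ⊓ orientationPreserving, g x = x := by
  by_cases htriv : ∀ g ∈ G ⊓ orientationPreserving, g = 1
  · exact ⟨0, fun g hg => by simp [htriv g hg]⟩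
  push Not at htriv
  obtain ⟨g₁, hg₁, hne₁⟩ := htriv
  obtain ⟨u₁, hu₁, hg₁u₁⟩ := exists_linearPart_apply_eq_self hE hg₁.2
  have haxis {v : E} (hv : g₁.linearPart v = v) : v ∈ ℝ ∙ u₁ :=
    linearPart_fixed_mem_span_singleton hE hg₁.2 (hfix g₁ hg₁.1) hne₁ hu₁ hg₁u₁ hv
  by_cases hcase : ∀ h ∈ G ⊓ orientationPreserving, h.linearPart u₁ = u₁
  · obtain ⟨x, hx⟩ := hfix g₁ hg₁.1
    refine ⟨x, fun h hh => apply_eq_self_of_commute (hfix h hh.1) ?_ ?_ hx⟩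
    · exact commute_of_commute_linearPart hfix hg₁.1 hh.1
        (LinearIsometryEquiv.commute_of_apply_eq_self hE hg₁.2 hh.2 hu₁ hg₁u₁ (hcase h hh))
    · intro v hv
      obtain ⟨c, rfl⟩ := mem_span_singleton.mp (haxis hv)
      rw [_root_.map_smul, hcase h hh]
  push Not at hcase
  obtain ⟨g₂, hg₂, hg₂u₁⟩ := hcase
  have hV : ∀ v, g₁.linearPart v = v → g₂.linearPart v = v → v = 0 := by
    intro v hv₁ hv₂
    obtain ⟨c, rfl⟩ := mem_span_singleton.mp (haxis hv₁)
    rw [_root_.map_smul] at hv₂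
    by_contra hc
    exact hg₂u₁ (smul_right_injective E (left_ne_zero_of_smul hc) hv₂)
  obtain ⟨u₂, hu₂, hg₂u₂⟩ := exists_linearPart_apply_eq_self hE hg₂.2
  have hu₁₂ : u₂ ∉ ℝ ∙ u₁ := fun h => hu₂ (hV u₂ (by
    obtain ⟨c, rfl⟩ := mem_span_singleton.mp h; rw [_root_.map_smul, hg₁u₁]) hg₂u₂)
  obtain ⟨w, hw₁, hw₂⟩ := exists_common_fixed_point_of_not_mem_span_singleton hE (hfix g₁ hg₁.1)
    (hfix g₂ hg₂.1) (hfix _ (G.mul_mem hg₁.1 hg₂.1)) hu₁ hg₁u₁ hg₂u₂ hu₁₂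
  exact ⟨w, fun k hk => apply_eq_self_of_common_fixed_vector_eq_zero hE hfix hg₁ hg₂ hk hV hw₁ hw₂⟩

end ThreeSpace

end IsometryEquiv

/-- For `d ∈ {2,3}`, a subgroup of `Isom(ℝᵈ)` all of whose elements have a
fixed point has a global fixed point. -/
theorem global_fixed_point_euclidean_dim_two_three (d : ℕ) (hd : d = 2 ∨ d = 3)
    (G : Subgroup (EuclideanSpace ℝ (Fin d) ≃ᵢ EuclideanSpace ℝ (Fin d)))
    (hfix : ∀ g ∈ G, ∃ x : EuclideanSpace ℝ (Fin d), g x = x) :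
    ∃ x : EuclideanSpace ℝ (Fin d), ∀ g ∈ G, g x = x := by
  refine IsometryEquiv.exists_forall_apply_eq_self_of_index_two
    (fun _ _ => IsometryEquiv.mul_mem_orientationPreserving) hfix ?_
  rcases hd with rfl | rfl
  · have : Fact (finrank ℝ (EuclideanSpace ℝ (Fin 2)) = 2) := ⟨finrank_euclideanSpace_fin⟩
    exact IsometryEquiv.exists_forall_orientationPreserving_apply_eq_self_of_finrank_eq_two hfix
  · exact IsometryEquiv.exists_forall_orientationPreserving_apply_eq_self_of_finrank_eq_three
      finrank_euclideanSpace_fin hfix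
end

section
/- Let d ≥ 1 and let S be a finite set of isometries of Euclidean space ℝᵈ. Then the following are equivalent: (1) L(S) = 0; (2) ℓ(S) = 0; (3) S has a common fixed point, i.e. there exists x ∈ ℝᵈ with s·x = x for all s ∈ S. -/
open Pointwise Filter

/-!
A common fixed point makes every `L(Sⁿ)` vanish, and `L(Sⁿ) ≤ n L(S)`, so the content of the
theorem is that `ℓ(S) = 0` forces a common fixed point.

If `ℓ(S) = 0`, then `d(x, g x)` grows sublinearly in the length of the word `g`. The linear
parts of words lie in a compact set, so by appending one of finitely many words the linear part
of any word can be brought within `1/4` of the identity. If the orbit of `0` were unbounded,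
starting from a word `u` with `u 0` long, appending "return word, then `u`" over and over would
move the orbit point by roughly `u 0` at each step, which is linear growth. So the orbit is
bounded; its closure `A` is compact, and an isometry mapping a compact set into itself maps it
onto itself. The parallelogram law makes the Chebyshev center of `A` unique, so every `s ∈ S`
fixes it.
-/

open RealInnerProductSpace Metric Bornology Set Topology

theorem Set.Finite.pow {M : Type*} [Monoid M] {s : Set M} (hs : s.Finite) (n : ℕ) :
    (s ^ n).Finite := by
  induction n with
  | zero => simp
  | succ n ih => rw [pow_succ]; exact ih.mul hs

section Displacement

variable {X : Type*} [MetricSpace X] {S : Set (X ≃ᵢ X)}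

theorem jointDispAt_nonneg (S : Set (X ≃ᵢ X)) (x : X) : 0 ≤ jointDispAt S x :=
  Real.sSup_nonneg (by rintro _ ⟨s, -, rfl⟩; exact dist_nonneg)

theorem dist_le_jointDispAt (hS : S.Finite) {s : X ≃ᵢ X} (hs : s ∈ S) (x : X) :
    dist x (s x) ≤ jointDispAt S x :=
  le_csSup (hS.image _).bddAbove ⟨s, hs, rfl⟩

theorem jointDispAt_le {x : X} {c : ℝ} (hc : 0 ≤ c) (h : ∀ s ∈ S, dist x (s x) ≤ c) :
    jointDispAt S x ≤ c :=
  Real.sSup_le (by rintro _ ⟨s, hs, rfl⟩; exact h s hs) hc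

theorem jointMinDisp_nonneg (S : Set (X ≃ᵢ X)) : 0 ≤ jointMinDisp S :=
  Real.sInf_nonneg (by rintro _ ⟨x, rfl⟩; exact jointDispAt_nonneg S x)

theorem jointMinDisp_le_jointDispAt (S : Set (X ≃ᵢ X)) (x : X) :
    jointMinDisp S ≤ jointDispAt S x :=
  csInf_le ⟨0, by rintro _ ⟨y, rfl⟩; exact jointDispAt_nonneg S y⟩ ⟨x, rfl⟩

theorem dist_mul_apply_le (u v : X ≃ᵢ X) (x : X) :
    dist x ((u * v) x) ≤ dist x (u x) + dist x (v x) :=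
  calc dist x ((u * v) x) ≤ dist x (u x) + dist (u x) (u (v x)) := dist_triangle _ _ _
    _ = dist x (u x) + dist x (v x) := by rw [u.dist_eq]

theorem dist_apply_le_add_two_mul_dist (g : X ≃ᵢ X) (x y : X) :
    dist x (g x) ≤ dist y (g y) + 2 * dist x y :=
  calc dist x (g x) ≤ dist x y + dist y (g y) + dist (g y) (g x) := dist_triangle4 _ _ _ _
    _ = dist y (g y) + 2 * dist x y := by rw [g.dist_eq, dist_comm y x]; ring

theorem dist_apply_le_of_mem_pow (hS : S.Finite) {n : ℕ} {g : X ≃ᵢ X} (hg : g ∈ S ^ n)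
    (x : X) : dist x (g x) ≤ n * jointDispAt S x := by
  induction n generalizing g with
  | zero =>
    rw [pow_zero, Set.mem_one] at hg
    simp [hg]
  | succ n ih =>
    obtain ⟨u, hu, v, hv, rfl⟩ := (pow_succ S n ▸ hg :)
    calc dist x ((u * v) x) ≤ dist x (u x) + dist x (v x) := dist_mul_apply_le u v x
      _ ≤ n * jointDispAt S x + jointDispAt S x := add_le_add (ih hu) (dist_le_jointDispAt hS hv x)
      _ = (n + 1 : ℕ) * jointDispAt S x := by push_cast; ring

theorem jointMinDisp_pow_le (hS : S.Finite) (n : ℕ) :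
    jointMinDisp (S ^ n) ≤ n * jointMinDisp S := by
  change ⨅ x, jointDispAt (S ^ n) x ≤ n * ⨅ x, jointDispAt S x
  rw [Real.mul_iInf_of_nonneg (Nat.cast_nonneg n)]
  exact ciInf_mono ⟨0, by rintro _ ⟨x, rfl⟩; exact jointDispAt_nonneg _ x⟩ fun x =>
    jointDispAt_le (mul_nonneg (Nat.cast_nonneg n) (jointDispAt_nonneg S x)) fun g hg =>
      dist_apply_le_of_mem_pow hS hg x

theorem jointMinDisp_pow_div_le (hS : S.Finite) (n : ℕ) :
    jointMinDisp (S ^ n) / n ≤ jointMinDisp S :=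
  div_le_of_le_mul₀ (Nat.cast_nonneg n) (jointMinDisp_nonneg S)
    ((jointMinDisp_pow_le hS n).trans_eq (mul_comm _ _))

theorem jointMinDisp_eq_zero_of_forall_apply_eq {x : X} (hx : ∀ s ∈ S, s x = x) :
    jointMinDisp S = 0 :=
  le_antisymm
    ((jointMinDisp_le_jointDispAt S x).trans
      (jointDispAt_le le_rfl fun s hs => by rw [hx s hs, dist_self]))
    (jointMinDisp_nonneg S)

theorem asympDisp_eq_zero_of_jointMinDisp_eq_zero (hS : S.Finite) (h : jointMinDisp S = 0) :
    asympDisp S = 0 := by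
  have hterm (n : ℕ) : jointMinDisp (S ^ n) / n = 0 :=
    le_antisymm (h ▸ jointMinDisp_pow_div_le hS n)
      (div_nonneg (jointMinDisp_nonneg _) (Nat.cast_nonneg n))
  simp only [asympDisp, hterm, limsup_const]

theorem exists_jointDispAt_pow_lt [Nonempty X] (hS : S.Finite) (h : asympDisp S = 0) {ε : ℝ}
    (hε : 0 < ε) : ∃ n : ℕ, 0 < n ∧ ∃ y, jointDispAt (S ^ n) y < ε * n := by
  have hbdd : IsBoundedUnder (· ≤ ·) atTop fun n : ℕ => jointMinDisp (S ^ n) / n :=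
    isBoundedUnder_of ⟨jointMinDisp S, jointMinDisp_pow_div_le hS⟩
  obtain ⟨n, hlt, hn⟩ :=
    ((eventually_lt_of_limsup_lt (h.trans_lt hε) hbdd).and (eventually_gt_atTop 0)).exists
  obtain ⟨_, ⟨y, rfl⟩, hy⟩ :=
    exists_lt_of_csInf_lt (range_nonempty _) ((div_lt_iff₀ (Nat.cast_pos.2 hn)).1 hlt)
  exact ⟨n, hn, y, hy⟩

/-- Cut a word of length `n` into `⌊n/k⌋` blocks from `Sᵏ` and a remainder shorter than `k`,
where `k` is chosen with some `L(Sᵏ, y) < ε k`. -/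
theorem exists_dist_apply_le_of_asympDisp_eq_zero (hS : S.Finite) (h : asympDisp S = 0)
    (x : X) {ε : ℝ} (hε : 0 < ε) :
    ∃ C, ∀ n : ℕ, ∀ g ∈ S ^ n, dist x (g x) ≤ ε * n + C := by
  have : Nonempty X := ⟨x⟩
  obtain ⟨k, hk, y, hy⟩ := exists_jointDispAt_pow_lt hS h hε
  refine ⟨k * jointDispAt S y + 2 * dist x y, fun n g hg => ?_⟩
  rw [← Nat.div_add_mod n k, pow_add, pow_mul] at hg
  obtain ⟨u, hu, v, hv, rfl⟩ := hg
  have hu' : dist y (u y) ≤ (n / k : ℕ) * (ε * k) :=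
    (dist_apply_le_of_mem_pow (hS.pow k) hu y).trans (by gcongr)
  have hv' : dist y (v y) ≤ k * jointDispAt S y :=
    (dist_apply_le_of_mem_pow hS hv y).trans (mul_le_mul_of_nonneg_right
      (by exact_mod_cast (Nat.mod_lt n hk).le) (jointDispAt_nonneg S y))
  have hn : ((n / k : ℕ) : ℝ) * k ≤ n := by exact_mod_cast Nat.div_mul_le_self n k
  calc dist x ((u * v) x) ≤ dist y ((u * v) y) + 2 * dist x y :=
        dist_apply_le_add_two_mul_dist _ _ _
    _ ≤ dist y (u y) + dist y (v y) + 2 * dist x y := by gcongr; exact dist_mul_apply_le u v y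
    _ ≤ ε * n + (k * jointDispAt S y + 2 * dist x y) := by nlinarith

end Displacement

section Recurrence

variable {X : Type*} [MetricSpace X]

/-- Along a subsequence converging in `K`, two consecutive terms `f^[a] x`, `f^[a+q+1] x` become
close; since `f^[a]` and `f` are isometric, so do `y` and `f^[q] x`. -/
theorem Isometry.mem_closure_range_iterate {f : X → X} (hf : Isometry f) {K : Set X}
    (hK : IsCompact K) {x y : X} (hxK : ∀ n, f^[n] x ∈ K) (hy : f y = x) :
    y ∈ closure (range fun n => f^[n] x) := by
  have hiter (n : ℕ) (a b : X) : dist (f^[n] a) (f^[n] b) = dist a b := by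
    induction n with
    | zero => rfl
    | succ n ih => rw [Function.iterate_succ_apply', Function.iterate_succ_apply', hf.dist_eq, ih]
  obtain ⟨_, -, φ, hφ, hlim⟩ := hK.tendsto_subseq hxK
  have hgap : Tendsto (fun k => dist (f^[φ k] x) (f^[φ (k + 1)] x)) atTop (𝓝 0) := by
    simpa using hlim.dist (hlim.comp (tendsto_add_atTop_nat 1))
  rw [Metric.mem_closure_iff]
  intro ε hε
  obtain ⟨k, hk⟩ := (hgap.eventually_lt_const hε).exists
  obtain ⟨q, hq⟩ := Nat.exists_eq_add_of_lt (hφ k.lt_succ_self)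
  refine ⟨f^[q] x, ⟨q, rfl⟩, ?_⟩
  calc dist y (f^[q] x) = dist (f^[φ k] x) (f^[φ k] (f^[q + 1] x)) := by
        rw [hiter, ← hf.dist_eq, ← Function.iterate_succ_apply' f q, hy]
    _ < ε := by rwa [← Function.iterate_add_apply, ← add_assoc, ← hq]

theorem IsometryEquiv.image_eq_of_mapsTo (f : X ≃ᵢ X) {K : Set X} (hK : IsCompact K)
    (hf : MapsTo f K K) : f '' K = K := by
  refine (hf.image_subset).antisymm fun y hy => ⟨f.symm y, ?_, f.apply_symm_apply y⟩
  have hrec := f.isometry.mem_closure_range_iterate hK (fun n => hf.iterate n hy)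
    (f.apply_symm_apply y)
  exact hK.isClosed.closure_subset_iff.2 (range_subset_iff.2 fun n => hf.iterate n hy) hrec

end Recurrence

section LinearPart

variable {E : Type*} [NormedAddCommGroup E] [NormedSpace ℝ E]

/-- Isometries of real normed spaces are affine by the Mazur–Ulam theorem. -/
noncomputable def linearPart : (E ≃ᵢ E) →* (E →L[ℝ] E) where
  toFun g := g.toRealLinearIsometryEquiv.toLinearIsometry.toContinuousLinearMap
  map_one' := by ext x; simp [IsometryEquiv.toRealLinearIsometryEquiv_apply]
  map_mul' g h := by
    ext x
    simp only [mul_apply_eq_comp, LinearIsometry.coe_toContinuousLinearMap,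
      LinearIsometryEquiv.coe_toLinearIsometry, IsometryEquiv.toRealLinearIsometryEquiv_apply,
      IsometryEquiv.mul_apply, map_sub]
    abel

theorem linearPart_apply (g : E ≃ᵢ E) (x : E) : linearPart g x = g x - g 0 :=
  g.toRealLinearIsometryEquiv_apply x

theorem apply_eq_linearPart_add (g : E ≃ᵢ E) (x : E) : g x = linearPart g x + g 0 := by
  rw [linearPart_apply, sub_add_cancel]

theorem norm_linearPart_apply (g : E ≃ᵢ E) (x : E) : ‖linearPart g x‖ = ‖x‖ :=
  g.toRealLinearIsometryEquiv.norm_map x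

theorem norm_linearPart_le (g : E ≃ᵢ E) : ‖linearPart g‖ ≤ 1 :=
  LinearIsometry.norm_toContinuousLinearMap_le _

theorem norm_linearPart_mul (g : E ≃ᵢ E) (A : E →L[ℝ] E) : ‖linearPart g * A‖ = ‖A‖ :=
  LinearIsometry.norm_toContinuousLinearMap_comp _

theorem isometry_linearPart_mul (g : E ≃ᵢ E) : Isometry (linearPart g * ·) :=
  Isometry.of_dist_eq fun A B => by
    rw [dist_eq_norm, dist_eq_norm, ← mul_sub, norm_linearPart_mul]

variable [FiniteDimensional ℝ E]

theorem isCompact_closure_image_linearPart (W : Set (E ≃ᵢ E)) :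
    IsCompact (closure (linearPart '' W)) :=
  (isCompact_closedBall 0 1).of_isClosed_subset isClosed_closure
    (closure_minimal (by rintro _ ⟨g, -, rfl⟩; simpa using norm_linearPart_le g)
      isClosed_closedBall)

theorem linearPart_inv_mem_closure {W : Set (E ≃ᵢ E)} {g : E ≃ᵢ E} (hW : ∀ k : ℕ, g ^ k ∈ W) :
    linearPart g⁻¹ ∈ closure (linearPart '' W) := by
  have hpow (k : ℕ) : (linearPart g * ·)^[k] 1 ∈ linearPart '' W := by
    rw [mul_left_iterate_apply_one, ← map_pow]
    exact mem_image_of_mem _ (hW k)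
  have hrec := (isometry_linearPart_mul g).mem_closure_range_iterate
    (isCompact_closure_image_linearPart W) (fun k => subset_closure (hpow k))
    (by rw [← map_mul, mul_inv_cancel, map_one])
  exact closure_minimal (range_subset_iff.2 fun k => subset_closure (hpow k)) isClosed_closure
    hrec

theorem exists_bounded_return (S : Set (E ≃ᵢ E)) {δ : ℝ} (hδ : 0 < δ) :
    ∃ (N : ℕ) (C : ℝ), ∀ n, ∀ g ∈ S ^ n,
      ∃ m ≤ N, ∃ v ∈ S ^ m, ‖v 0‖ ≤ C ∧ ‖linearPart (g * v) - 1‖ < δ := by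
  set W := ⋃ n, S ^ n
  have hcover : closure (linearPart '' W) ⊆
      ⋃ p ∈ {p : ℕ × (E ≃ᵢ E) | p.2 ∈ S ^ p.1}, ball (linearPart p.2) δ := by
    intro A hA
    obtain ⟨_, ⟨g, hg, rfl⟩, hAg⟩ := Metric.mem_closure_iff.1 hA δ hδ
    obtain ⟨n, hn⟩ := mem_iUnion.1 hg
    exact mem_iUnion₂.2 ⟨(n, g), hn, hAg⟩
  obtain ⟨F, hFS, hF, hFcover⟩ := (isCompact_closure_image_linearPart W).elim_finite_subcover_image
    (fun _ _ => isOpen_ball) hcover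
  obtain ⟨N, hN⟩ := (hF.image Prod.fst).bddAbove
  obtain ⟨C, hC⟩ := (hF.image fun p => ‖p.2 0‖).bddAbove
  refine ⟨N, C, fun n g hg => ?_⟩
  have hgW (k : ℕ) : g ^ k ∈ W := mem_iUnion.2 ⟨n * k, pow_mul S n k ▸ pow_mem_pow hg⟩
  obtain ⟨p, hpF, hp⟩ := mem_iUnion₂.1 (hFcover (linearPart_inv_mem_closure hgW))
  refine ⟨p.1, hN (mem_image_of_mem _ hpF), p.2, hFS hpF, hC (mem_image_of_mem _ hpF), ?_⟩
  calc ‖linearPart (g * p.2) - 1‖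
      = ‖linearPart g * linearPart p.2 - linearPart g * linearPart g⁻¹‖ := by
        rw [← map_mul, ← map_mul, mul_inv_cancel, map_one]
    _ = dist (linearPart g⁻¹) (linearPart p.2) := by
        rw [← mul_sub, norm_linearPart_mul, dist_comm, dist_eq_norm]
    _ < δ := hp

end LinearPart

section Growth

variable {E : Type*} [NormedAddCommGroup E] [InnerProductSpace ℝ E] {S : Set (E ≃ᵢ E)}

theorem le_inner_mul_mul_apply_zero (g v u : E ≃ᵢ E) (h : ‖linearPart (g * v) - 1‖ ≤ 1 / 4) :
    ⟪u 0, g 0⟫ + 3 / 4 * ‖u 0‖ ^ 2 - ‖u 0‖ * ‖v 0‖ ≤ ⟪u 0, (g * v * u) 0⟫ := by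
  have hdecomp : (g * v * u) 0 = linearPart (g * v) (u 0) + linearPart g (v 0) + g 0 := by
    rw [IsometryEquiv.mul_apply, apply_eq_linearPart_add (g * v), IsometryEquiv.mul_apply,
      apply_eq_linearPart_add g, add_assoc]
  have hnear : |⟪u 0, (linearPart (g * v) - 1) (u 0)⟫| ≤ 1 / 4 * ‖u 0‖ ^ 2 :=
    calc |⟪u 0, (linearPart (g * v) - 1) (u 0)⟫| ≤ ‖u 0‖ * ‖(linearPart (g * v) - 1) (u 0)‖ :=
          abs_real_inner_le_norm _ _
      _ ≤ ‖u 0‖ * (1 / 4 * ‖u 0‖) := by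
          gcongr; exact ((linearPart (g * v) - 1).le_opNorm _).trans (by gcongr)
      _ = 1 / 4 * ‖u 0‖ ^ 2 := by ring
  have hmain : ⟪u 0, linearPart (g * v) (u 0)⟫ =
      ‖u 0‖ ^ 2 + ⟪u 0, (linearPart (g * v) - 1) (u 0)⟫ := by
    rw [sub_apply, inner_sub_right, one_apply_eq_self, real_inner_self_eq_norm_sq]
    ring
  have hcross : |⟪u 0, linearPart g (v 0)⟫| ≤ ‖u 0‖ * ‖v 0‖ :=
    (abs_real_inner_le_norm _ _).trans_eq (by rw [norm_linearPart_apply])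
  rw [hdecomp, inner_add_right, inner_add_right, hmain]
  linarith [abs_le.1 hnear, abs_le.1 hcross]

theorem exists_linear_growth_of_unbounded [FiniteDimensional ℝ E]
    (hunb : ∀ R, ∃ n, ∃ g ∈ S ^ n, R < ‖g 0‖) :
    ∃ Q : ℕ, ∀ m : ℕ, ∃ n ≤ m * Q, ∃ g ∈ S ^ n, (m : ℝ) ≤ ‖g 0‖ := by
  obtain ⟨N, C, hret⟩ := exists_bounded_return S (δ := 1 / 4) (by norm_num)
  have hC : 0 ≤ C := by
    obtain ⟨-, -, v, -, hv, -⟩ := hret 0 1 (by simp)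
    exact (norm_nonneg _).trans hv
  obtain ⟨k, u, hu, hbig⟩ := hunb (4 / 3 * (C + 1))
  have hu0 : 0 < ‖u 0‖ := by linarith
  have hgrow (m : ℕ) : ∃ n ≤ m * (N + k), ∃ g ∈ S ^ n, m * ‖u 0‖ ≤ ⟪u 0, g 0⟫ := by
    induction m with
    | zero => exact ⟨0, by simp, 1, by simp, by simp⟩
    | succ m ih =>
      obtain ⟨n, hn, g, hg, hgain⟩ := ih
      obtain ⟨j, hj, v, hv, hv0, hgv⟩ := hret n g hg
      refine ⟨n + j + k, by nlinarith, g * v * u, ?_, ?_⟩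
      · rw [pow_add, pow_add]
        exact mul_mem_mul (mul_mem_mul hg hv) hu
      · have hstep := le_inner_mul_mul_apply_zero g v u hgv.le
        have hgain' : ‖u 0‖ ≤ 3 / 4 * ‖u 0‖ ^ 2 - ‖u 0‖ * ‖v 0‖ := by nlinarith
        push_cast
        linarith
  refine ⟨N + k, fun m => ?_⟩
  obtain ⟨n, hn, g, hg, hgain⟩ := hgrow m
  refine ⟨n, hn, g, hg, le_of_mul_le_mul_right ?_ hu0⟩
  exact hgain.trans ((real_inner_le_norm _ _).trans_eq (mul_comm _ _))

theorem exists_orbit_bound_of_sublinear [FiniteDimensional ℝ E]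
    (H : ∀ ε > 0, ∃ C, ∀ n : ℕ, ∀ g ∈ S ^ n, ‖g 0‖ ≤ ε * n + C) :
    ∃ R, ∀ n : ℕ, ∀ g ∈ S ^ n, ‖g 0‖ ≤ R := by
  by_contra! hunb
  obtain ⟨Q, hQ⟩ := exists_linear_growth_of_unbounded hunb
  obtain ⟨C, hC⟩ := H (1 / (2 * (Q + 1))) (by positivity)
  obtain ⟨m, hm⟩ := exists_nat_gt (2 * C)
  obtain ⟨n, hn, g, hg, hgm⟩ := hQ m
  have hn' : (n : ℝ) ≤ m * (Q + 1) := by exact_mod_cast hn.trans (by nlinarith)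
  have hslow : 1 / (2 * (Q + 1)) * (n : ℝ) ≤ m / 2 := by
    rw [div_mul_eq_mul_div, one_mul, div_le_div_iff₀ (by positivity) two_pos]
    nlinarith
  linarith [hC n g hg]

end Growth

section ChebyshevCenter

variable {X : Type*} [MetricSpace X] {A : Set X}

noncomputable def farthestDist (A : Set X) (x : X) : ℝ := ⨆ a : A, dist x a

theorem dist_le_farthestDist (hA : IsBounded A) {a : X} (ha : a ∈ A) (x : X) :
    dist x a ≤ farthestDist A x := by
  obtain ⟨r, hr⟩ := (isBounded_iff_subset_closedBall x).1 hA
  refine le_ciSup (f := fun b : A => dist x b) ⟨r, ?_⟩ ⟨a, ha⟩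
  rintro _ ⟨b, rfl⟩
  exact (dist_comm x b).trans_le (mem_closedBall.1 (hr b.2))

theorem farthestDist_le (hne : A.Nonempty) {x : X} {c : ℝ} (h : ∀ a ∈ A, dist x a ≤ c) :
    farthestDist A x ≤ c :=
  have := hne.to_subtype
  ciSup_le fun a => h a a.2

theorem farthestDist_nonneg (hA : IsBounded A) (hne : A.Nonempty) (x : X) :
    0 ≤ farthestDist A x :=
  dist_nonneg.trans (dist_le_farthestDist hA hne.some_mem x)

theorem continuous_farthestDist (hA : IsBounded A) (hne : A.Nonempty) :
    Continuous (farthestDist A) :=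
  (LipschitzWith.of_le_add fun x y => farthestDist_le hne fun a ha =>
    calc dist x a ≤ dist x y + dist y a := dist_triangle x y a
      _ ≤ farthestDist A y + dist x y := by
        rw [add_comm]; gcongr; exact dist_le_farthestDist hA ha y).continuous

theorem farthestDist_apply_of_image_eq (hA : IsBounded A) (hne : A.Nonempty) {s : X ≃ᵢ X}
    (hs : s '' A = A) (x : X) : farthestDist A (s x) = farthestDist A x := by
  refine le_antisymm (farthestDist_le hne fun a ha => ?_) (farthestDist_le hne fun a ha => ?_)
  · obtain ⟨b, hb, rfl⟩ := (hs.symm ▸ ha : a ∈ s '' A)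
    rw [s.dist_eq]
    exact dist_le_farthestDist hA hb x
  · rw [← s.dist_eq]
    exact dist_le_farthestDist hA (hs ▸ mem_image_of_mem s ha) _

theorem exists_forall_farthestDist_le [ProperSpace X] (hA : IsBounded A) (hne : A.Nonempty) :
    ∃ c, ∀ x, farthestDist A c ≤ farthestDist A x := by
  obtain ⟨a, ha⟩ := hne
  refine (continuous_farthestDist hA ⟨a, ha⟩).exists_forall_le_of_isBounded a
    ((isBounded_closedBall (x := a) (r := farthestDist A a)).subset fun x hx => ?_)
  exact mem_closedBall.2 ((dist_le_farthestDist hA ha x).trans hx)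

variable {E : Type*} [NormedAddCommGroup E] [InnerProductSpace ℝ E] {A : Set E}

theorem farthestDist_midpoint_sq_le (hA : IsBounded A) (hne : A.Nonempty) (c c' : E) :
    farthestDist A (midpoint ℝ c c') ^ 2 ≤
      (farthestDist A c ^ 2 + farthestDist A c' ^ 2) / 2 - dist c c' ^ 2 / 4 := by
  set r := (farthestDist A c ^ 2 + farthestDist A c' ^ 2) / 2 - dist c c' ^ 2 / 4
  have hpt : ∀ a ∈ A, dist (midpoint ℝ c c') a ^ 2 ≤ r := fun a ha => by
    have hapollonius :=
      EuclideanGeometry.dist_sq_add_dist_sq_eq_two_mul_dist_midpoint_sq_add_half_dist_sq a c c'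
    have h := pow_le_pow_left₀ dist_nonneg (dist_le_farthestDist hA ha c) 2
    have h' := pow_le_pow_left₀ dist_nonneg (dist_le_farthestDist hA ha c') 2
    rw [dist_comm a, dist_comm a, dist_comm a] at hapollonius
    simp only [r]
    linarith
  calc farthestDist A (midpoint ℝ c c') ^ 2 ≤ √r ^ 2 :=
        pow_le_pow_left₀ (farthestDist_nonneg hA hne _)
          (farthestDist_le hne fun a ha => (le_abs_self _).trans (Real.abs_le_sqrt (hpt a ha))) 2
    _ = r := Real.sq_sqrt ((sq_nonneg _).trans (hpt _ hne.some_mem))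

/-- The Chebyshev center of `A` is fixed, being unique by the parallelogram law. -/
theorem exists_fixedPoint_of_image_eq [FiniteDimensional ℝ E] (hA : IsBounded A)
    (hne : A.Nonempty) {S : Set (E ≃ᵢ E)} (hS : ∀ s ∈ S, s '' A = A) :
    ∃ c, ∀ s ∈ S, s c = c := by
  obtain ⟨c, hc⟩ := exists_forall_farthestDist_le hA hne
  refine ⟨c, fun s hs => ?_⟩
  have hmid := farthestDist_midpoint_sq_le hA hne c (s c)
  rw [farthestDist_apply_of_image_eq hA hne (hS s hs)] at hmid
  have hmin := hc (midpoint ℝ c (s c))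
  have h0 := farthestDist_nonneg hA hne c
  have hdist : dist c (s c) ^ 2 ≤ 0 := by nlinarith
  exact (dist_eq_zero.1 (pow_eq_zero_iff two_ne_zero |>.1
    (le_antisymm hdist (sq_nonneg _)))).symm

end ChebyshevCenter

section FixedPoint

variable {E : Type*} [NormedAddCommGroup E] [InnerProductSpace ℝ E] [FiniteDimensional ℝ E]
  {S : Set (E ≃ᵢ E)}

theorem exists_fixedPoint_of_orbit_bounded {R : ℝ} (hR : ∀ n, ∀ g ∈ S ^ n, ‖g 0‖ ≤ R) :
    ∃ x, ∀ s ∈ S, s x = x := by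
  set O := {y : E | ∃ n, ∃ g ∈ S ^ n, g 0 = y}
  have hO : IsBounded O := (isBounded_closedBall (x := 0) (r := R)).subset <| by
    rintro _ ⟨n, g, hg, rfl⟩
    simpa using hR n g hg
  have hmaps (s : E ≃ᵢ E) (hs : s ∈ S) : MapsTo s O O := by
    rintro _ ⟨n, g, hg, rfl⟩
    exact ⟨n + 1, s * g, pow_succ' S n ▸ mul_mem_mul hs hg, rfl⟩
  have hK := hO.isCompact_closure
  exact exists_fixedPoint_of_image_eq hK.isBounded ⟨0, subset_closure ⟨0, 1, by simp, rfl⟩⟩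
    fun s hs => s.image_eq_of_mapsTo hK ((hmaps s hs).closure s.continuous)

theorem exists_fixedPoint_of_asympDisp_eq_zero (hS : S.Finite) (h : asympDisp S = 0) :
    ∃ x, ∀ s ∈ S, s x = x := by
  obtain ⟨R, hR⟩ := exists_orbit_bound_of_sublinear fun ε hε => by
    simpa only [dist_zero_left] using exists_dist_apply_le_of_asympDisp_eq_zero hS h 0 hε
  exact exists_fixedPoint_of_orbit_bounded hR

end FixedPoint

theorem euclidean_jointMinDisp_zero_iff_general (d : ℕ)
    (S : Set (EuclideanSpace ℝ (Fin d) ≃ᵢ EuclideanSpace ℝ (Fin d))) (hfin : S.Finite) :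
    (jointMinDisp S = 0 ↔ asympDisp S = 0) ∧
    (asympDisp S = 0 ↔ ∃ x : EuclideanSpace ℝ (Fin d), ∀ s ∈ S, s x = x) := by
  have hfix_min : (∃ x : EuclideanSpace ℝ (Fin d), ∀ s ∈ S, s x = x) → jointMinDisp S = 0 :=
    fun ⟨_, hx⟩ => jointMinDisp_eq_zero_of_forall_apply_eq hx
  have hmin_asymp := asympDisp_eq_zero_of_jointMinDisp_eq_zero hfin
  have hasymp_fix := exists_fixedPoint_of_asympDisp_eq_zero hfin
  exact ⟨⟨hmin_asymp, hfix_min ∘ hasymp_fix⟩, ⟨hasymp_fix, hmin_asymp ∘ hfix_min⟩⟩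

/-- For a finite set `S` of isometries of Euclidean space `ℝᵈ`, the following
are equivalent: `L(S) = 0`; `ℓ(S) = 0`; `S` has a common fixed point. -/
theorem euclidean_jointMinDisp_zero_iff (d : ℕ) (hd : 1 ≤ d)
    (S : Set (EuclideanSpace ℝ (Fin d) ≃ᵢ EuclideanSpace ℝ (Fin d))) (hfin : S.Finite) :
    (jointMinDisp S = 0 ↔ asympDisp S = 0) ∧
    (asympDisp S = 0 ↔ ∃ x : EuclideanSpace ℝ (Fin d), ∀ s ∈ S, s x = x) :=
  euclidean_jointMinDisp_zero_iff_general d S hfin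
end

section
/- Let a, b ∈ SL₂(ℂ) be such that each of a, b and ab has all its eigenvalues of modulus 1. Then at least one of the following holds: (1) there exists g ∈ GL₂(ℂ) such that g·a·g⁻¹ and g·b·g⁻¹ both belong to SU(2), the group of 2×2 unitary matrices of determinant 1; (2) there exists g ∈ GL₂(ℂ) such that g·a·g⁻¹ and g·b·g⁻¹ are both upper triangular matrices (necessarily with diagonal entries of modulus 1); (3) the commutator [a,b] := a·b·a⁻¹·b⁻¹ is loxodromic, i.e. has an eigenvalue of modulus different from 1. -/
/-!
Conjugate `a` to `!![μ, c; 0, μ⁻¹]`, with `c = 0` when `μ ≠ ±1`, and write `b = !![p, q; r, s]`;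
unless `a` and `b` share an eigenvector, `r ≠ 0`. Unimodular eigenvalues make the traces of `b` and
`ab` real, and `tr [a, b] = 2 + r (c² r + c (μ - μ⁻¹)(p - s) - q (μ - μ⁻¹)²)`.
If `μ = ±1`, then `c r` is real and nonzero, so `tr [a, b] = 2 + (c r)² > 2`.
Otherwise `μ⁻¹ = conj μ ≠ μ`, so reality of the traces forces `s = conj p` and `q r = |p|² - 1`,
real and nonzero. If `q r < 0`, conjugating by `diag(t, 1)` for a suitable `t > 0` puts both `a`
and `b` in `SU(2)`; if `q r > 0`, then `tr [a, b] = 2 + 4 (Im μ)² q r > 2`. A real trace `> 2` makes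
`[a, b]` loxodromic, since an element of `SL₂(ℂ)` with a unimodular eigenvalue `μ` has trace
`μ + conj μ = 2 Re μ ≤ 2`.
-/

open Complex

namespace Matrix

variable {n K : Type*} [Fintype n] [DecidableEq n] [Field K]

def HasCommonEigenvector (A B : Matrix n n K) : Prop :=
  ∃ v : n → K, v ≠ 0 ∧ (∃ α : K, A *ᵥ v = α • v) ∧ ∃ β : K, B *ᵥ v = β • v

def SimultaneouslyConjugateInto (S : Set (Matrix n n K)) (A B : Matrix n n K) : Prop :=
  ∃ g : GL n K, (g : Matrix n n K) * A * ((g⁻¹ : GL n K) : Matrix n n K) ∈ S ∧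
    (g : Matrix n n K) * B * ((g⁻¹ : GL n K) : Matrix n n K) ∈ S

theorem exists_mulVec_eq_smul_of_mem_spectrum {A : Matrix n n K} {μ : K}
    (hμ : μ ∈ spectrum K A) : ∃ v ≠ 0, A *ᵥ v = μ • v := by
  rw [spectrum.mem_iff, isUnit_iff_isUnit_det, isUnit_iff_ne_zero, not_not,
    ← exists_mulVec_eq_zero_iff] at hμ
  obtain ⟨v, hv, hAv⟩ := hμ
  refine ⟨v, hv, ?_⟩
  rw [sub_mulVec, sub_eq_zero, Algebra.algebraMap_eq_smul_one, smul_mulVec, one_mulVec] at hAv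
  exact hAv.symm

theorem hasCommonEigenvector_of_col_off_diag_eq_zero {A B : Matrix n n K} (i : n)
    (hA : ∀ j ≠ i, A j i = 0) (hB : ∀ j ≠ i, B j i = 0) : HasCommonEigenvector A B := by
  have hsingle : ∀ M : Matrix n n K, (∀ j ≠ i, M j i = 0) →
      M *ᵥ Pi.single i 1 = M i i • Pi.single i 1 := by
    intro M hM
    ext j
    rcases eq_or_ne j i with rfl | hj <;> simp [*]
  exact ⟨Pi.single i 1, by simp, ⟨_, hsingle A hA⟩, _, hsingle B hB⟩

theorem hasCommonEigenvector_smul_one_left [Nonempty n] [IsAlgClosed K] (α : K)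
    (B : Matrix n n K) : HasCommonEigenvector (α • 1) B := by
  obtain ⟨β, hβ⟩ := spectrum.nonempty_of_isAlgClosed_of_finiteDimensional K B
  obtain ⟨v, hv, hBv⟩ := exists_mulVec_eq_smul_of_mem_spectrum hβ
  exact ⟨v, hv, ⟨α, by rw [smul_mulVec, one_mulVec]⟩, β, hBv⟩

theorem col_conj_eq_smul_single {A P P' : Matrix n n K} (hP : P' * P = 1) {i : n} {α : K}
    (hA : A *ᵥ P.col i = α • P.col i) : (P' * A * P).col i = α • Pi.single i 1 := by
  rw [← mulVec_single_one, ← mulVec_mulVec, ← mulVec_mulVec, mulVec_single_one P, hA,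
    mulVec_smul, ← mulVec_single_one P, mulVec_mulVec, hP, one_mulVec]

namespace SpecialLinearGroup

theorem coe_toGL_inv (h : SpecialLinearGroup n K) :
    (((toGL h)⁻¹ : GL n K) : Matrix n n K) = ((h⁻¹ : SpecialLinearGroup n K) : Matrix n n K) := by
  rw [← map_inv]
  rfl

theorem spectrum_coe_conj (h x : SpecialLinearGroup n K) :
    spectrum K ((h⁻¹ * x * h : SpecialLinearGroup n K) : Matrix n n K) =
      spectrum K (x : Matrix n n K) := by
  rw [coe_mul, coe_mul, ← coe_toGL_inv]
  exact spectrum.units_conjugate'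

theorem _root_.Matrix.SimultaneouslyConjugateInto.of_conj {S : Set (Matrix n n K)}
    {a b h : SpecialLinearGroup n K}
    (H : SimultaneouslyConjugateInto S (↑(h⁻¹ * a * h) : Matrix n n K) ↑(h⁻¹ * b * h)) :
    SimultaneouslyConjugateInto S (a : Matrix n n K) b := by
  obtain ⟨g, ha, hb⟩ := H
  have hconj (x : SpecialLinearGroup n K) :
      ((g * (toGL h)⁻¹ : GL n K) : Matrix n n K) * (x : Matrix n n K) *
          ((g * (toGL h)⁻¹)⁻¹ : GL n K) =
        (g : Matrix n n K) * ((h⁻¹ * x * h : SpecialLinearGroup n K) : Matrix n n K) *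
          ((g⁻¹ : GL n K) : Matrix n n K) := by
    rw [show (g * (toGL h)⁻¹)⁻¹ = toGL h * g⁻¹ by group]
    simp only [Units.val_mul, coe_toGL_inv, coe_GL_coe_matrix, coe_mul, mul_assoc]
  exact ⟨g * (toGL h)⁻¹, by rwa [hconj], by rwa [hconj]⟩

end SpecialLinearGroup

section FinTwo

variable {K : Type*} [Field K]

theorem mem_spectrum_iff_of_det_eq_one {A : Matrix (Fin 2) (Fin 2) K} (hA : A.det = 1)
    {μ : K} : μ ∈ spectrum K A ↔ μ ^ 2 - A.trace * μ + 1 = 0 := by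
  simp [mem_spectrum_iff_isRoot_charpoly, charpoly_fin_two, hA]

theorem blockTriangular_id_of_col_zero_eq_smul {M : Matrix (Fin 2) (Fin 2) K} {α : K}
    (hM : M.col 0 = α • Pi.single 0 1) : M.BlockTriangular id := by
  intro i j hij
  fin_cases i <;> fin_cases j <;> simp at hij
  simpa using congrFun hM 1

theorem SpecialLinearGroup.trace_commutator_of_coe_eq_upper {R : Type*} [CommRing R]
    {a b : SpecialLinearGroup (Fin 2) R} {μ ν c p q r s : R}
    (ha : (a : Matrix (Fin 2) (Fin 2) R) = !![μ, c; 0, ν])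
    (hb : (b : Matrix (Fin 2) (Fin 2) R) = !![p, q; r, s]) :
    ((a * b * a⁻¹ * b⁻¹ : SpecialLinearGroup (Fin 2) R) : Matrix (Fin 2) (Fin 2) R).trace =
      2 + r * (c ^ 2 * r + c * (μ - ν) * (p - s) - q * (μ - ν) ^ 2) := by
  have hμν : μ * ν = 1 := by simpa [ha] using a.prop
  have hdet : p * s - q * r = 1 := by simpa [hb] using b.prop
  simp only [coe_mul, coe_inv, ha, hb, adjugate_fin_two_of, mul_fin_two, trace_fin_two_of]
  linear_combination 2 * μ * ν * hdet + 2 * hμν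

namespace SpecialLinearGroup

theorem exists_col_zero_eq {v : Fin 2 → K} (hv : v ≠ 0) :
    ∃ h : SpecialLinearGroup (Fin 2) K, (h : Matrix (Fin 2) (Fin 2) K).col 0 = v := by
  by_cases h0 : v 0 = 0
  · have h1 : v 1 ≠ 0 := fun h1 => hv (funext fun i => by fin_cases i <;> assumption)
    exact ⟨⟨!![v 0, -(v 1)⁻¹; v 1, 0], by simp [h1]⟩, funext fun i => by fin_cases i <;> rfl⟩
  · exact ⟨⟨!![v 0, 0; v 1, (v 0)⁻¹], by simp [h0]⟩, funext fun i => by fin_cases i <;> rfl⟩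

theorem col_zero_conj_eq_smul {a h : SpecialLinearGroup (Fin 2) K} {α : K}
    (ha : (a : Matrix (Fin 2) (Fin 2) K) *ᵥ (h : Matrix (Fin 2) (Fin 2) K).col 0 =
      α • (h : Matrix (Fin 2) (Fin 2) K).col 0) :
    ((h⁻¹ * a * h : SpecialLinearGroup (Fin 2) K) : Matrix (Fin 2) (Fin 2) K).col 0 =
      α • Pi.single 0 1 := by
  rw [coe_mul, coe_mul]
  exact col_conj_eq_smul_single (by rw [← coe_mul, inv_mul_cancel, coe_one]) ha

theorem exists_conj_eq_upper {a : SpecialLinearGroup (Fin 2) K} {μ : K}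
    (hμ : μ ∈ spectrum K (a : Matrix (Fin 2) (Fin 2) K)) :
    ∃ h : SpecialLinearGroup (Fin 2) K, ∃ c : K,
      ((h⁻¹ * a * h : SpecialLinearGroup (Fin 2) K) : Matrix (Fin 2) (Fin 2) K) =
        !![μ, c; 0, μ⁻¹] := by
  obtain ⟨v, hv, hav⟩ := exists_mulVec_eq_smul_of_mem_spectrum hμ
  obtain ⟨h, rfl⟩ := exists_col_zero_eq hv
  have hcol := col_zero_conj_eq_smul hav
  refine ⟨h, (h⁻¹ * a * h) 0 1, ?_⟩
  generalize h⁻¹ * a * h = X at hcol ⊢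
  have h00 : (X : Matrix (Fin 2) (Fin 2) K) 0 0 = μ := by simpa using congrFun hcol 0
  have h10 : (X : Matrix (Fin 2) (Fin 2) K) 1 0 = 0 := by simpa using congrFun hcol 1
  have hdet := X.prop
  rw [det_fin_two, h00, h10, mul_zero, sub_zero] at hdet
  ext i j
  fin_cases i <;> fin_cases j <;> simp [h00, h10, eq_inv_of_mul_eq_one_right hdet]

theorem exists_conj_upper_eq_diagonal {μ : K} (hμ : μ ^ 2 ≠ 1) (hμ0 : μ ≠ 0) (c : K) :
    ∃ u : SpecialLinearGroup (Fin 2) K,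
      ((u⁻¹ : SpecialLinearGroup (Fin 2) K) : Matrix (Fin 2) (Fin 2) K) * !![μ, c; 0, μ⁻¹] *
        u = !![μ, 0; 0, μ⁻¹] := by
  have hne : μ⁻¹ - μ ≠ 0 := by
    intro h
    apply hμ
    field_simp at h
    linear_combination -h
  refine ⟨⟨!![1, c / (μ⁻¹ - μ); 0, 1], by simp⟩, ?_⟩
  change adjugate !![1, c / (μ⁻¹ - μ); 0, 1] * _ * !![1, c / (μ⁻¹ - μ); 0, 1] = _
  simp only [adjugate_fin_two_of, mul_fin_two]
  ext i j
  fin_cases i <;> fin_cases j <;> simp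
  field_simp
  ring

theorem exists_conj_eq_upper_diagonal_of_sq_ne_one {a : SpecialLinearGroup (Fin 2) K} {μ : K}
    (hμ : μ ∈ spectrum K (a : Matrix (Fin 2) (Fin 2) K)) :
    ∃ h : SpecialLinearGroup (Fin 2) K, ∃ c : K,
      ((h⁻¹ * a * h : SpecialLinearGroup (Fin 2) K) : Matrix (Fin 2) (Fin 2) K) =
        !![μ, c; 0, μ⁻¹] ∧ (μ ^ 2 ≠ 1 → c = 0) := by
  obtain ⟨h, c, hc⟩ := exists_conj_eq_upper hμ
  by_cases hμ2 : μ ^ 2 = 1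
  · exact ⟨h, c, hc, fun h => absurd hμ2 h⟩
  have hμ0 : μ ≠ 0 := by
    rintro rfl
    simp [mem_spectrum_iff_of_det_eq_one a.prop] at hμ
  obtain ⟨u, hu⟩ := exists_conj_upper_eq_diagonal hμ2 hμ0 c
  refine ⟨h * u, 0, ?_, fun _ => rfl⟩
  rw [show (h * u)⁻¹ * a * (h * u) = u⁻¹ * (h⁻¹ * a * h) * u by group, coe_mul, coe_mul, hc,
    hu]

end SpecialLinearGroup

theorem HasCommonEigenvector.simultaneouslyConjugateInto_blockTriangular
    {a b : SpecialLinearGroup (Fin 2) K}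
    (H : HasCommonEigenvector (a : Matrix (Fin 2) (Fin 2) K) b) :
    SimultaneouslyConjugateInto {M | M.BlockTriangular id} (a : Matrix (Fin 2) (Fin 2) K)
      b := by
  obtain ⟨v, hv, ⟨α, ha⟩, β, hb⟩ := H
  obtain ⟨h, rfl⟩ := SpecialLinearGroup.exists_col_zero_eq hv
  refine SimultaneouslyConjugateInto.of_conj (h := h) ⟨1, ?_, ?_⟩ <;>
    simp only [Units.val_one, inv_one, one_mul, mul_one, Set.mem_ofPred_eq]
  · exact blockTriangular_id_of_col_zero_eq_smul (SpecialLinearGroup.col_zero_conj_eq_smul ha)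
  · exact blockTriangular_id_of_col_zero_eq_smul (SpecialLinearGroup.col_zero_conj_eq_smul hb)

end FinTwo

section Complex

open ComplexConjugate

variable {A : Matrix (Fin 2) (Fin 2) ℂ}

theorem trace_eq_add_conj_of_mem_spectrum (hA : A.det = 1) {μ : ℂ} (hμ : μ ∈ spectrum ℂ A)
    (h1 : ‖μ‖ = 1) : A.trace = μ + conj μ := by
  rw [mem_spectrum_iff_of_det_eq_one hA] at hμ
  have hμc : μ * conj μ = 1 := by rw [mul_conj', h1]; norm_num
  apply mul_left_cancel₀ (left_ne_zero_of_mul_eq_one hμc)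
  linear_combination -hμ - hμc

theorem conj_trace_eq_of_forall_norm_eq_one (hA : A.det = 1)
    (h : ∀ μ ∈ spectrum ℂ A, ‖μ‖ = 1) : conj A.trace = A.trace := by
  obtain ⟨μ, hμ⟩ := spectrum.nonempty_of_isAlgClosed_of_finiteDimensional ℂ A
  rw [trace_eq_add_conj_of_mem_spectrum hA hμ (h μ hμ), map_add, conj_conj, add_comm]

theorem exists_norm_ne_one_of_two_lt_trace (hA : A.det = 1) {t : ℝ} (ht : 2 < t)
    (htr : A.trace = t) : ∃ μ ∈ spectrum ℂ A, ‖μ‖ ≠ 1 := by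
  by_contra! h
  obtain ⟨μ, hμ⟩ := spectrum.nonempty_of_isAlgClosed_of_finiteDimensional ℂ A
  have hre := trace_eq_add_conj_of_mem_spectrum hA hμ (h μ hμ)
  rw [htr, add_conj] at hre
  have : t = 2 * μ.re := by exact_mod_cast hre
  linarith [re_le_norm μ, h μ hμ]

theorem mem_specialUnitaryGroup_fin_two {α β : ℂ} (h : ‖α‖ ^ 2 + ‖β‖ ^ 2 = 1) :
    !![α, -conj β; β, conj α] ∈ specialUnitaryGroup (Fin 2) ℂ := by
  have hc : α * conj α + β * conj β = 1 := by
    rw [mul_conj', mul_conj']; exact_mod_cast h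
  rw [mem_specialUnitaryGroup_iff, mem_unitaryGroup_iff, star_eq_conjTranspose, det_fin_two_of]
  refine ⟨?_, by linear_combination hc⟩
  ext i j
  fin_cases i <;> fin_cases j <;> simp [mul_apply, Fin.sum_univ_two]
  · linear_combination hc
  · ring
  · ring
  · linear_combination hc

theorem simultaneouslyConjugateInto_specialUnitaryGroup {μ p q r : ℂ} (hμ : ‖μ‖ = 1) {k : ℝ}
    (hk : 0 < k) (hqr : q * r = -k) (hp : ‖p‖ ^ 2 + k = 1) :
    SimultaneouslyConjugateInto (specialUnitaryGroup (Fin 2) ℂ) !![μ, 0; 0, conj μ]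
      !![p, q; r, conj p] := by
  have hr : r ≠ 0 := by
    rintro rfl
    rw [mul_zero, zero_eq_neg, ofReal_eq_zero] at hqr
    exact hk.ne' hqr
  -- `t² k = |r|²` is what makes the conjugate of `b` by `diag(t, 1)` of the shape of `SU(2)`
  set t : ℝ := ‖r‖ / √k
  have ht : 0 < t := by positivity
  have htC : (t : ℂ) ≠ 0 := by exact_mod_cast ht.ne'
  have ht2 : (t : ℂ) ^ 2 * k = r * conj r := by
    rw [mul_conj', ← ofReal_pow, ← ofReal_mul, div_pow, Real.sq_sqrt hk.le,
      div_mul_cancel₀ _ hk.ne']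
    norm_cast
  let g : GL (Fin 2) ℂ := ⟨!![(t : ℂ), 0; 0, 1], !![(t : ℂ)⁻¹, 0; 0, 1],
    by simp [one_fin_two, htC], by simp [one_fin_two, htC]⟩
  have hq : (t : ℂ) * q = -conj (r / t) := by
    rw [map_div₀, conj_ofReal]
    field_simp
    have hkC : (k : ℂ) ≠ 0 := by exact_mod_cast hk.ne'
    apply mul_right_cancel₀ hkC
    linear_combination q * ht2 + conj r * hqr
  refine ⟨g, ?_, ?_⟩
  · have hA : (g : Matrix (Fin 2) (Fin 2) ℂ) * !![μ, 0; 0, conj μ] *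
        ((g⁻¹ : GL (Fin 2) ℂ) : Matrix (Fin 2) (Fin 2) ℂ) = !![μ, -conj 0; 0, conj μ] := by
      simp [g]
      field_simp
    rw [hA]
    exact mem_specialUnitaryGroup_fin_two (by simp [hμ])
  · have hB : (g : Matrix (Fin 2) (Fin 2) ℂ) * !![p, q; r, conj p] *
        ((g⁻¹ : GL (Fin 2) ℂ) : Matrix (Fin 2) (Fin 2) ℂ) =
          !![p, -conj (r / t); r / t, conj p] := by
      simp [g, hq, div_eq_mul_inv]
      field_simp
    have hβ : ‖r / t‖ ^ 2 = k := by
      rw [norm_div, norm_real, Real.norm_of_nonneg ht.le, div_pow, div_pow, Real.sq_sqrt hk.le]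
      field_simp
    rw [hB]
    exact mem_specialUnitaryGroup_fin_two (by rw [hβ, hp])

theorem specialUnitary_or_two_lt_of_elliptic {μ p q r s : ℂ} (hμ : ‖μ‖ = 1) (hμ2 : μ ^ 2 ≠ 1)
    (hdet : p * s - q * r = 1) (hqr : q * r ≠ 0) (hy : conj (p + s) = p + s)
    (hz : conj (μ * p + conj μ * s) = μ * p + conj μ * s) :
    SimultaneouslyConjugateInto (specialUnitaryGroup (Fin 2) ℂ) !![μ, 0; 0, conj μ]
        !![p, q; r, s] ∨
      ∃ t : ℝ, 2 < t ∧ 2 - q * r * (μ - conj μ) ^ 2 = t := by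
  have hμc : μ * conj μ = 1 := by rw [mul_conj', hμ]; norm_num
  have hne : μ - conj μ ≠ 0 := by
    intro h
    apply hμ2
    linear_combination μ * h + hμc
  have hs : s = conj p := by
    simp only [map_add, map_mul, conj_conj] at hy hz
    have : (μ - conj μ) * (p - conj s) = 0 := by linear_combination -hz + conj μ * hy
    rw [sub_eq_zero.mp ((mul_eq_zero.mp this).resolve_left hne), conj_conj]
  subst hs
  set d : ℝ := ‖p‖ ^ 2 - 1
  have hqr' : q * r = d := by
    push_cast [d]
    linear_combination -hdet + mul_conj' p
  have hd : d ≠ 0 := fun h => hqr (by rw [hqr', h, ofReal_zero])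
  rcases hd.lt_or_gt with hd | hd
  · left
    exact simultaneouslyConjugateInto_specialUnitaryGroup hμ (k := -d) (by linarith)
      (by rw [hqr', ofReal_neg, neg_neg]) (by simp [d])
  · right
    have him : μ.im ≠ 0 := fun h => hne (by rw [sub_conj, h]; simp)
    refine ⟨2 + 4 * μ.im ^ 2 * d, lt_add_of_pos_right _ (mul_pos (by positivity) hd), ?_⟩
    rw [hqr', sub_conj]
    push_cast
    ring_nf
    rw [I_sq]
    ring

theorem exists_two_lt_of_parabolic {μ c p r s : ℂ} (hμ : μ ^ 2 = 1) (hcr : c * r ≠ 0)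
    (hy : conj (p + s) = p + s) (hz : conj (μ * p + c * r + μ * s) = μ * p + c * r + μ * s) :
    ∃ t : ℝ, 2 < t ∧ 2 + (c * r) ^ 2 = t := by
  have hμr : conj μ = μ := by rcases sq_eq_one_iff.mp hμ with rfl | rfl <;> simp
  have hreal : conj (c * r) = c * r := by
    simp only [map_add, map_mul, hμr] at hy hz ⊢
    linear_combination hz - μ * hy
  rw [conj_eq_iff_re] at hreal
  have hre : (c * r).re ≠ 0 := fun h => hcr (by rw [← hreal, h, ofReal_zero])
  refine ⟨2 + (c * r).re ^ 2, lt_add_of_pos_right _ (by positivity), ?_⟩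
  conv_lhs => rw [← hreal]
  push_cast
  ring

theorem serre_trichotomy_of_coe_eq_upper (a b : SpecialLinearGroup (Fin 2) ℂ) {μ c : ℂ}
    (ha : (a : Matrix (Fin 2) (Fin 2) ℂ) = !![μ, c; 0, μ⁻¹]) (hc : μ ^ 2 ≠ 1 → c = 0)
    (hμ : ‖μ‖ = 1)
    (hb : conj (b : Matrix (Fin 2) (Fin 2) ℂ).trace = (b : Matrix (Fin 2) (Fin 2) ℂ).trace)
    (hab : conj ((a * b : SpecialLinearGroup (Fin 2) ℂ) : Matrix (Fin 2) (Fin 2) ℂ).trace =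
      ((a * b : SpecialLinearGroup (Fin 2) ℂ) : Matrix (Fin 2) (Fin 2) ℂ).trace) :
    SimultaneouslyConjugateInto (specialUnitaryGroup (Fin 2) ℂ) (a : Matrix (Fin 2) (Fin 2) ℂ)
        b ∨
      SimultaneouslyConjugateInto {M | M.BlockTriangular id} (a : Matrix (Fin 2) (Fin 2) ℂ) b ∨
      ∃ ν ∈ spectrum ℂ ((a * b * a⁻¹ * b⁻¹ : SpecialLinearGroup (Fin 2) ℂ) :
        Matrix (Fin 2) (Fin 2) ℂ), ‖ν‖ ≠ 1 := by
  by_cases hcommon : HasCommonEigenvector (a : Matrix (Fin 2) (Fin 2) ℂ) b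
  · exact Or.inr (Or.inl hcommon.simultaneouslyConjugateInto_blockTriangular)
  obtain ⟨p, q, r, s, hB⟩ : ∃ p q r s : ℂ, (b : Matrix (Fin 2) (Fin 2) ℂ) = !![p, q; r, s] :=
    ⟨_, _, _, _, eta_fin_two _⟩
  have hdet : p * s - q * r = 1 := by rw [← det_fin_two_of, ← hB]; exact b.prop
  have hμc : μ⁻¹ = conj μ := inv_eq_of_mul_eq_one_right (by rw [mul_conj', hμ]; norm_num)
  have hr : r ≠ 0 := by
    rintro rfl
    exact hcommon <| hasCommonEigenvector_of_col_off_diag_eq_zero 0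
      (by simp [ha, Fin.forall_fin_two]) (by simp [hB, Fin.forall_fin_two])
  have hy : conj (p + s) = p + s := by simpa [hB, trace_fin_two] using hb
  have hz : conj (μ * p + c * r + μ⁻¹ * s) = μ * p + c * r + μ⁻¹ * s := by
    simpa [ha, hB, trace_fin_two, mul_fin_two] using hab
  have htr := SpecialLinearGroup.trace_commutator_of_coe_eq_upper ha hB
  have hlox := @exists_norm_ne_one_of_two_lt_trace _ (a * b * a⁻¹ * b⁻¹).prop
  rcases eq_or_ne (μ ^ 2) 1 with hμ2 | hμ2
  · have hμ' : μ⁻¹ = μ := inv_eq_of_mul_eq_one_right (by rw [← sq, hμ2])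
    have hc0 : c ≠ 0 := by
      rintro rfl
      refine hcommon ?_
      convert hasCommonEigenvector_smul_one_left μ (b : Matrix (Fin 2) (Fin 2) ℂ)
      rw [ha, hμ']
      ext i j
      fin_cases i <;> fin_cases j <;> simp
    rw [hμ'] at hz htr
    obtain ⟨t, ht, htc⟩ := exists_two_lt_of_parabolic hμ2 (mul_ne_zero hc0 hr) hy hz
    exact Or.inr (Or.inr (hlox ht (by rw [htr, ← htc]; ring)))
  · obtain rfl := hc hμ2
    have hq : q ≠ 0 := by
      rintro rfl
      exact hcommon <| hasCommonEigenvector_of_col_off_diag_eq_zero 1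
        (by simp [ha, Fin.forall_fin_two]) (by simp [hB, Fin.forall_fin_two])
    rw [hμc] at hz htr
    rcases specialUnitary_or_two_lt_of_elliptic hμ hμ2 hdet (mul_ne_zero hq hr) hy
      (by simpa using hz) with h | ⟨t, ht, htq⟩
    · exact Or.inl (by rwa [ha, hB, hμc])
    · exact Or.inr (Or.inr (hlox ht (by rw [htr, ← htq]; ring)))

end Complex

end Matrix

open Matrix

/-- If `a, b ∈ SL₂(ℂ)` are such that `a`, `b` and `ab` all have eigenvalues of
modulus `1`, then either `a` and `b` are simultaneously conjugate into `SU(2)`, or they are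
simultaneously conjugate into the upper triangular matrices, or the commutator
`[a,b] = a b a⁻¹ b⁻¹` is loxodromic (has an eigenvalue of modulus `≠ 1`). -/
theorem sl2_serre_trichotomy (a b : Matrix.SpecialLinearGroup (Fin 2) ℂ)
    (ha : ∀ μ ∈ spectrum ℂ ((a : Matrix (Fin 2) (Fin 2) ℂ)), ‖μ‖ = 1)
    (hb : ∀ μ ∈ spectrum ℂ ((b : Matrix (Fin 2) (Fin 2) ℂ)), ‖μ‖ = 1)
    (hab : ∀ μ ∈ spectrum ℂ (((a * b : Matrix.SpecialLinearGroup (Fin 2) ℂ) :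
        Matrix (Fin 2) (Fin 2) ℂ)), ‖μ‖ = 1) :
    (∃ g : GL (Fin 2) ℂ,
      ((g : Matrix (Fin 2) (Fin 2) ℂ) * a * ((g⁻¹ : GL (Fin 2) ℂ) : Matrix (Fin 2) (Fin 2) ℂ)
          ∈ Matrix.unitaryGroup (Fin 2) ℂ ∧
        ((g : Matrix (Fin 2) (Fin 2) ℂ) * a *
          ((g⁻¹ : GL (Fin 2) ℂ) : Matrix (Fin 2) (Fin 2) ℂ)).det = 1) ∧
      ((g : Matrix (Fin 2) (Fin 2) ℂ) * b * ((g⁻¹ : GL (Fin 2) ℂ) : Matrix (Fin 2) (Fin 2) ℂ)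
          ∈ Matrix.unitaryGroup (Fin 2) ℂ ∧
        ((g : Matrix (Fin 2) (Fin 2) ℂ) * b *
          ((g⁻¹ : GL (Fin 2) ℂ) : Matrix (Fin 2) (Fin 2) ℂ)).det = 1)) ∨
    (∃ g : GL (Fin 2) ℂ,
      (∀ i j : Fin 2, (j : ℕ) < (i : ℕ) →
        ((g : Matrix (Fin 2) (Fin 2) ℂ) * a *
          ((g⁻¹ : GL (Fin 2) ℂ) : Matrix (Fin 2) (Fin 2) ℂ)) i j = 0) ∧
      (∀ i j : Fin 2, (j : ℕ) < (i : ℕ) →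
        ((g : Matrix (Fin 2) (Fin 2) ℂ) * b *
          ((g⁻¹ : GL (Fin 2) ℂ) : Matrix (Fin 2) (Fin 2) ℂ)) i j = 0)) ∨
    (∃ μ ∈ spectrum ℂ (((a * b * a⁻¹ * b⁻¹ : Matrix.SpecialLinearGroup (Fin 2) ℂ) :
        Matrix (Fin 2) (Fin 2) ℂ)), ‖μ‖ ≠ 1) := by
  obtain ⟨μ, hμ⟩ := spectrum.nonempty_of_isAlgClosed_of_finiteDimensional ℂ
    (a : Matrix (Fin 2) (Fin 2) ℂ)
  obtain ⟨h, c, ha₁, hc⟩ := SpecialLinearGroup.exists_conj_eq_upper_diagonal_of_sq_ne_one hμ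
  have hb₁ := conj_trace_eq_of_forall_norm_eq_one (h⁻¹ * b * h).prop
    (by rwa [SpecialLinearGroup.spectrum_coe_conj])
  have hab₁ := conj_trace_eq_of_forall_norm_eq_one ((h⁻¹ * a * h) * (h⁻¹ * b * h)).prop
    (by rwa [show (h⁻¹ * a * h) * (h⁻¹ * b * h) = h⁻¹ * (a * b) * h by group,
      SpecialLinearGroup.spectrum_coe_conj])
  rcases serre_trichotomy_of_coe_eq_upper _ _ ha₁ hc (ha μ hμ) hb₁ hab₁ with
    H | H | ⟨ν, hν, hν1⟩
  · exact Or.inl H.of_conj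
  · exact Or.inr (Or.inl H.of_conj)
  · refine Or.inr (Or.inr ⟨ν, ?_, hν1⟩)
    rwa [show (h⁻¹ * a * h) * (h⁻¹ * b * h) * (h⁻¹ * a * h)⁻¹ * (h⁻¹ * b * h)⁻¹ =
      h⁻¹ * (a * b * a⁻¹ * b⁻¹) * h by group, SpecialLinearGroup.spectrum_coe_conj] at hν
end
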